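/- arXiv:2006.08418 — 6 statements merged into one kernel-verified Lean document; each statement's English description precedes it below -/
import Mathlib

section
/- Let n ≥ 1 and let m be a Hessenberg function on {1,…,n}. Then for every partition μ of n, the following identity holds in ℤ[q]: Σ_{o} q^{wt(o)} = Σ_{F} q^{n−ℓ(μ)} (q+1)^{wt_m(F)}, where the left sum runs over all orientations o of G_m with λ(o) = μ and the right sum runs over all increasing spanning forests F ∈ F(G_m) with λ(F) = μ. -/
open Finset

/-- A Hessenberg function on the vertex set `Fin n` (0-indexed version of `{1,…,n}`):
a monotone function with `i ≤ m i` for all `i`.  The associated indifference graph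
`G_m` has an edge `{i,j}` whenever `i < j ≤ m i`. -/
structure Hessenberg (n : ℕ) where
  m : Fin n → Fin n
  mono : Monotone m
  le_m : ∀ i, i ≤ m i

/-- An increasing spanning forest of the indifference graph `G_m`, encoded by its
parent function `g` : `g j = some u` means `{u, j}` is an edge of the forest with
`u < j` and `j ≤ m u` (so that `{u,j}` is an edge of `G_m`); `g j = none` means `j`
is a root. -/
def ISF {n : ℕ} (h : Hessenberg n) : Type :=
  {g : Fin n → Option (Fin n) // ∀ j u, g j = some u → u < j ∧ j ≤ h.m u}

instance {n : ℕ} (h : Hessenberg n) : Fintype (ISF h) := by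
  unfold ISF; infer_instance

instance {n : ℕ} (h : Hessenberg n) : DecidableEq (ISF h) := by
  unfold ISF; infer_instance

/-- The root of the component of `j` in the forest with parent function `g`. -/
def rootOf {n : ℕ} (g : Fin n → Option (Fin n))
    (hg : ∀ j u, g j = some u → u < j) (j : Fin n) : Fin n :=
  match hj : g j with
  | none => j
  | some u => rootOf g hg u
termination_by j.val
decreasing_by exact hg j u hj

/-- The root (minimal vertex) of the component of `j` in the forest `F`. -/
def ISF.root {n : ℕ} {h : Hessenberg n} (F : ISF h) (j : Fin n) : Fin n :=
  rootOf F.1 (fun j u hj => (F.2 j u hj).1) j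

/-- The set of roots of the forest `F`. -/
def ISF.roots {n : ℕ} {h : Hessenberg n} (F : ISF h) : Finset (Fin n) :=
  univ.filter (fun j => F.1 j = none)

/-- `ℓ(F)`, the number of connected components of `F`. -/
def ISF.numComp {n : ℕ} {h : Hessenberg n} (F : ISF h) : ℕ := F.roots.card

/-- The number of vertices of the component of `F` with root `r`. -/
def ISF.compSize {n : ℕ} {h : Hessenberg n} (F : ISF h) (r : Fin n) : ℕ :=
  (univ.filter (fun w => F.root w = r)).card

/-- `λ(F)`: the multiset of component sizes of `F` (a partition of `n`). -/
def ISF.parts {n : ℕ} {h : Hessenberg n} (F : ISF h) : Multiset ℕ :=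
  F.roots.val.map F.compSize

/-- The number of `G_m`-inversions of `F`: pairs `v < w` that are edges of `G_m`
(`w ≤ m v`) such that the component of `v` comes strictly after (has larger root
than) the component of `w`. -/
def ISF.inv {n : ℕ} {h : Hessenberg n} (F : ISF h) : ℕ :=
  (univ.filter (fun p : Fin n × Fin n =>
    p.1 < p.2 ∧ p.2 ≤ h.m p.1 ∧ F.root p.2 < F.root p.1)).card

/-- The length of the edge of `F` below `j` (0 if `j` is a root): the number of
vertices of the component of `j` strictly between the two endpoints. -/
def ISF.edgeLen {n : ℕ} {h : Hessenberg n} (F : ISF h) (j : Fin n) : ℕ :=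
  (F.1 j).elim 0 (fun u =>
    (univ.filter (fun w => F.root w = F.root j ∧ u < w ∧ w < j)).card)

/-- `wt_m(F) = inv(F) + Σ_T wt(T)`, the weight of the increasing spanning forest. -/
def ISF.wt {n : ℕ} {h : Hessenberg n} (F : ISF h) : ℕ :=
  F.inv + ∑ j, F.edgeLen j

/-- `y_{λ(F)}`, the product of `y` over the component sizes of `F`. -/
def yProd {R : Type*} [CommRing R] (y : ℕ → R) {n : ℕ} {h : Hessenberg n}
    (F : ISF h) : R :=
  ∏ r ∈ F.roots, y (F.compSize r)

/-- `X(m) = Σ_{F ∈ F(G_m)} q^{wt_m(F)} y_{λ(F)}`. -/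
def Xfun {R : Type*} [CommRing R] (q : R) (y : ℕ → R) {n : ℕ} (h : Hessenberg n) : R :=
  ∑ F : ISF h, q ^ F.wt * yProd y F

/-- The `q`-integer `[j]_q = 1 + q + ⋯ + q^{j-1}`. -/
def qInt {R : Type*} [CommRing R] (q : R) (j : ℕ) : R := ∑ k ∈ range j, q ^ k

/-- The `q`-factorial `n!_q = Π_{j=1}^n [j]_q`. -/
def qFact {R : Type*} [CommRing R] (q : R) (n : ℕ) : R := ∏ j ∈ range n, qInt q (j + 1)

/-- An orientation of the indifference graph `G_m`: a choice, for each edge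
`{u,v}` with `u < v ≤ m u`, of a direction; `true` means the edge is oriented to
the left (from `v` down to `u`). -/
def GOrient {n : ℕ} (h : Hessenberg n) : Type :=
  {e : Fin n × Fin n // e.1 < e.2 ∧ e.2 ≤ h.m e.1} → Bool

instance {n : ℕ} (h : Hessenberg n) : Fintype (GOrient h) := by
  unfold GOrient; infer_instance

instance {n : ℕ} (h : Hessenberg n) : DecidableEq (GOrient h) := by
  unfold GOrient; infer_instance

/-- `wt(o)`: the number of edges oriented to the left. -/
def GOrient.wtO {n : ℕ} {h : Hessenberg n} (o : GOrient h) : ℕ :=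
  (@Finset.filter _ (fun e => o e = true) (fun e => instDecidableEqBool (o e) true) Finset.univ).card

/-- Whether `{u,v}` is an edge of `G_m` oriented to the left (from `v` down to `u`). -/
def GOrient.leftOr {n : ℕ} {h : Hessenberg n} (o : GOrient h) (u v : Fin n) :
    Bool :=
  if he : u < v ∧ v ≤ h.m u then o ⟨(u, v), he⟩ else false

/-- The set of vertices reachable from `v` by directed paths of length at most `k`
using only edges oriented to the left. -/
def GOrient.reachSet {n : ℕ} {h : Hessenberg n} (o : GOrient h) :
    ℕ → Fin n → Finset (Fin n)
  | 0, v => {v}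
  | k + 1, v =>
      insert v ((Finset.univ.filter (fun u => o.leftOr u v = true)).biUnion
        (GOrient.reachSet o k))

lemma GOrient.mem_reachSet_self {n : ℕ} {h : Hessenberg n} (o : GOrient h)
    (k : ℕ) (v : Fin n) : v ∈ o.reachSet k v := by
  cases k <;> simp [GOrient.reachSet]

/-- `lrv_o(v)`: the lowest vertex reachable from `v` using left-oriented edges.
(Since every left-oriented step strictly decreases the vertex, paths have length
less than `n`, so `reachSet o n v` is the full set of reachable vertices.) -/
def GOrient.lrv {n : ℕ} {h : Hessenberg n} (o : GOrient h) (v : Fin n) : Fin n :=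
  (o.reachSet n v).min' ⟨v, o.mem_reachSet_self n v⟩

/-- `λ(o)`: the multiset of the nonzero cardinalities of the fibers of `lrv_o`. -/
def GOrient.oParts {n : ℕ} {h : Hessenberg n} (o : GOrient h) : Multiset ℕ :=
  ((Finset.univ.filter (fun u : Fin n => ∃ v, o.lrv v = u)).val).map
    (fun u => (Finset.univ.filter (fun v => o.lrv v = u)).card)

section AN
variable {n : ℕ} {h : Hessenberg n}

lemma rootOf_eq (g : Fin n → Option (Fin n)) (hg : ∀ j u, g j = some u → u < j) (j : Fin n) :
    rootOf g hg j = (match g j with | none => j | some u => rootOf g hg u) := by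
  rw [rootOf]
  split <;> rename_i heq <;> simp [heq]

lemma root_none (F : ISF h) {j : Fin n} (hj : F.1 j = none) : F.root j = j := by
  unfold ISF.root; rw [rootOf_eq]; simp [hj]

lemma root_some (F : ISF h) {j u : Fin n} (hj : F.1 j = some u) : F.root j = F.root u := by
  unfold ISF.root; rw [rootOf_eq]; simp [hj]

lemma fin_strong_ind {P : Fin n → Prop} (ih : ∀ j : Fin n, (∀ u, u < j → P u) → P j) :
    ∀ j, P j := by
  have H : ∀ N, ∀ j : Fin n, j.val < N → P j := by
    intro N
    induction N with
    | zero => intro j hj; omega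
    | succ N IH =>
      intro j hj
      exact ih j (fun u hu => IH u (by omega))
  exact fun j => H (j.val + 1) j (by omega)

lemma root_le (F : ISF h) : ∀ j, F.root j ≤ j := by
  refine fin_strong_ind (fun j IH => ?_)
  cases hj : F.1 j with
  | none => rw [root_none F hj]
  | some u =>
    rw [root_some F hj]
    exact le_of_lt (lt_of_le_of_lt (IH u (F.2 j u hj).1) (F.2 j u hj).1)

lemma root_isRoot (F : ISF h) : ∀ j, F.1 (F.root j) = none := by
  refine fin_strong_ind (fun j IH => ?_)
  cases hj : F.1 j with
  | none => rw [root_none F hj]; exact hj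
  | some u => rw [root_some F hj]; exact IH u (F.2 j u hj).1

end AN
section AN2
variable {n : ℕ} {h : Hessenberg n}

/-- The set of left-neighbors of `v`. -/
def leftNbrs (o : GOrient h) (v : Fin n) : Finset (Fin n) :=
  univ.filter (fun u => o.leftOr u v = true)

lemma leftOr_lt {o : GOrient h} {u v : Fin n} (hu : o.leftOr u v = true) :
    u < v ∧ v ≤ h.m u := by
  unfold GOrient.leftOr at hu
  by_cases he : u < v ∧ v ≤ h.m u
  · exact he
  · rw [dif_neg he] at hu; exact absurd hu (by simp)

lemma leftOr_eq (o : GOrient h) {u v : Fin n} (he : u < v ∧ v ≤ h.m u) :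
    o.leftOr u v = o ⟨(u, v), he⟩ := dif_pos he

lemma mem_leftNbrs {o : GOrient h} {u v : Fin n} :
    u ∈ leftNbrs o v ↔ o.leftOr u v = true := by simp [leftNbrs]

lemma reachSet_zero (o : GOrient h) (v : Fin n) : o.reachSet 0 v = {v} := rfl

lemma reachSet_succ (o : GOrient h) (k : ℕ) (v : Fin n) :
    o.reachSet (k + 1) v = insert v ((leftNbrs o v).biUnion (o.reachSet k)) := rfl

lemma reach_stab (o : GOrient h) :
    ∀ v : Fin n, ∀ k, v.val ≤ k → o.reachSet (k + 1) v = o.reachSet k v := by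
  refine fin_strong_ind (fun v IH => ?_)
  intro k hk
  cases k with
  | zero =>
    rw [reachSet_succ, reachSet_zero]
    have : leftNbrs o v = ∅ := by
      refine eq_empty_of_forall_notMem (fun u hu => ?_)
      have := (leftOr_lt (mem_leftNbrs.1 hu)).1
      have : u.val < v.val := this
      omega
    rw [this]; simp
  | succ k =>
    rw [reachSet_succ, reachSet_succ]
    congr 1
    refine biUnion_congr rfl (fun u hu => ?_)
    have hlt : u < v := (leftOr_lt (mem_leftNbrs.1 hu)).1
    exact IH u hlt k (by have : u.val < v.val := hlt; omega)

lemma reach_top (o : GOrient h) (v : Fin n) :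
    o.reachSet n v = insert v ((leftNbrs o v).biUnion (o.reachSet n)) := by
  obtain ⟨m, rfl⟩ : ∃ m, n = m + 1 := ⟨n - 1, by have := v.2; omega⟩
  rw [reachSet_succ]
  congr 1
  refine biUnion_congr rfl (fun u hu => ?_)
  have hlt : u < v := (leftOr_lt (mem_leftNbrs.1 hu)).1
  exact (reach_stab o u m (by have h1 := v.2; have : u.val < v.val := hlt; omega)).symm

lemma lrv_mem (o : GOrient h) (v : Fin n) : o.lrv v ∈ o.reachSet n v := min'_mem _ _

lemma lrv_le_of_mem {o : GOrient h} {v x : Fin n} (hx : x ∈ o.reachSet n v) :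
    o.lrv v ≤ x := min'_le _ _ hx

lemma lrv_le_self (o : GOrient h) (v : Fin n) : o.lrv v ≤ v :=
  lrv_le_of_mem (o.mem_reachSet_self n v)

lemma reach_subset {o : GOrient h} {u v : Fin n} (hu : u ∈ leftNbrs o v) :
    o.reachSet n u ⊆ o.reachSet n v := by
  rw [reach_top o v]
  exact (subset_biUnion_of_mem (o.reachSet n) hu).trans (subset_insert _ _)

lemma lrv_le_left {o : GOrient h} {u v : Fin n} (hu : u ∈ leftNbrs o v) :
    o.lrv v ≤ o.lrv u := lrv_le_of_mem (reach_subset hu (lrv_mem o u))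

lemma lrv_cases (o : GOrient h) (v : Fin n) :
    o.lrv v = v ∨ ∃ u ∈ leftNbrs o v, o.lrv v = o.lrv u := by
  have hm := lrv_mem o v
  rw [reach_top o v, mem_insert] at hm
  rcases hm with hm | hm
  · exact Or.inl hm
  · rw [mem_biUnion] at hm
    obtain ⟨u, hu, hx⟩ := hm
    exact Or.inr ⟨u, hu, le_antisymm (lrv_le_left hu) (lrv_le_of_mem hx)⟩

lemma lrv_empty {o : GOrient h} {v : Fin n} (hv : leftNbrs o v = ∅) : o.lrv v = v := by
  rcases lrv_cases o v with hc | ⟨u, hu, _⟩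
  · exact hc
  · rw [hv] at hu; exact absurd hu (notMem_empty u)

end AN2
section AN3
variable {n : ℕ} {h : Hessenberg n}

/-- Left-neighbors of `j` whose `lrv` is minimal. -/
def minSet (o : GOrient h) (j : Fin n) : Finset (Fin n) :=
  (leftNbrs o j).filter (fun u => ∀ u' ∈ leftNbrs o j, o.lrv u ≤ o.lrv u')

lemma minSet_nonempty {o : GOrient h} {j : Fin n} (hL : (leftNbrs o j).Nonempty) :
    (minSet o j).Nonempty := by
  obtain ⟨x, hx, hm⟩ := exists_min_image (leftNbrs o j) o.lrv hL
  exact ⟨x, mem_filter.2 ⟨hx, hm⟩⟩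

/-- The parent function of the forest associated to an orientation. -/
def PhiFun (o : GOrient h) (j : Fin n) : Option (Fin n) :=
  if hL : (leftNbrs o j).Nonempty then some ((minSet o j).min' (minSet_nonempty hL))
  else none

/-- The increasing spanning forest associated to an orientation. -/
def Phi (o : GOrient h) : ISF h := by
  refine ⟨PhiFun o, fun j u hj => ?_⟩
  unfold PhiFun at hj
  split at hj
  · rename_i hL
    have hu : u ∈ minSet o j := by
      rw [← Option.some_inj.1 hj]; exact min'_mem _ _
    exact leftOr_lt (mem_leftNbrs.1 (mem_filter.1 hu).1)
  · exact absurd hj (by simp)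

lemma PhiFun_none {o : GOrient h} {j : Fin n} (hL : leftNbrs o j = ∅) :
    PhiFun o j = none := by
  unfold PhiFun; rw [dif_neg]; simp [hL]

lemma PhiFun_some_mem {o : GOrient h} {j u : Fin n} (hj : PhiFun o j = some u) :
    u ∈ minSet o j := by
  unfold PhiFun at hj
  split at hj
  · rw [← Option.some_inj.1 hj]; exact min'_mem _ _
  · exact absurd hj (by simp)

lemma lrv_phi (o : GOrient h) : ∀ v, (Phi o).root v = o.lrv v := by
  refine fin_strong_ind (fun v IH => ?_)
  cases hv : PhiFun o v with
  | none =>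
    have hL : leftNbrs o v = ∅ := by
      unfold PhiFun at hv
      split at hv
      · exact absurd hv (by simp)
      · rename_i hL; exact not_nonempty_iff_eq_empty.1 hL
    rw [root_none (Phi o) hv, lrv_empty hL]
  | some u =>
    have hu := PhiFun_some_mem hv
    obtain ⟨huL, humin⟩ := mem_filter.1 hu
    have hult : u < v := (leftOr_lt (mem_leftNbrs.1 huL)).1
    have h1 : o.lrv v ≤ o.lrv u := lrv_le_left huL
    rw [root_some (Phi o) hv, IH u hult]
    refine le_antisymm ?_ h1
    rcases lrv_cases o v with hc | ⟨u', hu', hc⟩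
    · exfalso
      have : o.lrv v ≤ u := h1.trans (lrv_le_self o u)
      rw [hc] at this
      exact absurd (this.trans_lt hult) (lt_irrefl v)
    · rw [hc]; exact humin u' hu'

/-- Whether `e` is an edge of the forest `F`. -/
def isForest (F : ISF h) (e : {e : Fin n × Fin n // e.1 < e.2 ∧ e.2 ≤ h.m e.1}) : Prop :=
  F.1 e.1.2 = some e.1.1

/-- Whether `e` is a "free" edge for `F` (an inversion edge or a length edge). -/
def isFree (F : ISF h) (e : {e : Fin n × Fin n // e.1 < e.2 ∧ e.2 ≤ h.m e.1}) : Prop :=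
  F.root e.1.2 < F.root e.1.1 ∨
    (F.root e.1.1 = F.root e.1.2 ∧ ∃ u, F.1 e.1.2 = some u ∧ u < e.1.1)

instance (F : ISF h) : DecidablePred (isForest F) := fun e => by unfold isForest; infer_instance
instance (F : ISF h) : DecidablePred (isFree F) := fun e => by unfold isFree; infer_instance

/-- The allowed orientations of an edge, given `F`. -/
def edgeOK (F : ISF h) (e : {e : Fin n × Fin n // e.1 < e.2 ∧ e.2 ≤ h.m e.1}) : Finset Bool :=
  if isForest F e then {true} else if isFree F e then Finset.univ else {false}

end AN3
section AN4
variable {n : ℕ} {h : Hessenberg n}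

lemma noLeft {o : GOrient h} {F : ISF h} (hF : ∀ e, o e ∈ edgeOK F e) {j : Fin n}
    (hj : F.1 j = none) : leftNbrs o j = ∅ := by
  refine eq_empty_of_forall_notMem (fun u hu => ?_)
  have hul := mem_leftNbrs.1 hu
  have he := leftOr_lt hul
  have hoe : o ⟨(u, j), he⟩ = true := by rw [← leftOr_eq o he]; exact hul
  have hmem := hF ⟨(u, j), he⟩
  rw [edgeOK] at hmem
  rw [if_neg, if_neg] at hmem
  · rw [hoe] at hmem; simp at hmem
  · rintro (hc | ⟨-, u₀, hu₀, -⟩)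
    · have h1 : F.root j = j := root_none F hj
      have h2 : F.root u ≤ u := root_le F u
      simp only at hc
      rw [h1] at hc
      exact absurd ((hc.trans_le h2).trans he.1) (lt_irrefl j)
    · simp only [hj] at hu₀; exact nomatch hu₀
  · intro hc; rw [isForest] at hc; simp only [hj] at hc; exact nomatch hc

lemma forest_mem {o : GOrient h} {F : ISF h} (hF : ∀ e, o e ∈ edgeOK F e) {j u : Fin n}
    (hj : F.1 j = some u) : u ∈ leftNbrs o j := by
  have he := F.2 j u hj
  have hmem := hF ⟨(u, j), he⟩
  rw [edgeOK, if_pos (by rw [isForest]; exact hj)] at hmem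
  rw [mem_singleton] at hmem
  rw [mem_leftNbrs, leftOr_eq o he]
  exact hmem

lemma lrv_eq_root {o : GOrient h} {F : ISF h} (hF : ∀ e, o e ∈ edgeOK F e) :
    ∀ v, o.lrv v = F.root v := by
  refine fin_strong_ind (fun v IH => ?_)
  cases hv : F.1 v with
  | none => rw [lrv_empty (noLeft hF hv), root_none F hv]
  | some u =>
    have huL := forest_mem hF hv
    have hult : u < v := (F.2 v u hv).1
    have hru : F.root v = F.root u := root_some F hv
    have h1 : o.lrv v ≤ F.root v := by
      rw [hru, ← IH u hult]; exact lrv_le_left huL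
    rcases lrv_cases o v with hc | ⟨u', hu', hc⟩
    · exfalso
      have h2 : F.root v ≤ u := hru.le.trans (root_le F u)
      have := hc ▸ (h1.trans h2).trans_lt hult
      exact absurd this (lt_irrefl v)
    · have hu'lt : u' < v := (leftOr_lt (mem_leftNbrs.1 hu')).1
      have hl' : o.lrv u' = F.root u' := IH u' hu'lt
      have hul2 := mem_leftNbrs.1 hu'
      have he' := leftOr_lt hul2
      have hoe : o ⟨(u', v), he'⟩ = true := by rw [← leftOr_eq o he']; exact hul2
      have hmem := hF ⟨(u', v), he'⟩
      rw [edgeOK] at hmem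
      by_cases hfor : isForest F (⟨(u', v), he'⟩ : {e : Fin n × Fin n // e.1 < e.2 ∧ e.2 ≤ h.m e.1})
      · rw [isForest] at hfor
        simp only at hfor
        rw [hv] at hfor
        have : u = u' := Option.some_inj.1 hfor.symm ▸ rfl
        rw [hc, hl', ← this, ← hru]
      · rw [if_neg hfor] at hmem
        by_cases hfree : isFree F (⟨(u', v), he'⟩ : {e : Fin n × Fin n // e.1 < e.2 ∧ e.2 ≤ h.m e.1})
        · rcases hfree with hc1 | ⟨hc2, -⟩
          · exfalso
            simp only at hc1
            have : o.lrv v < F.root u' := by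
              calc o.lrv v ≤ F.root v := h1
              _ < F.root u' := hc1
            rw [hc, hl'] at this
            exact absurd this (lt_irrefl _)
          · simp only at hc2
            rw [hc, hl', hc2]
        · rw [if_neg hfree, mem_singleton, hoe] at hmem
          exact absurd hmem (by simp)

end AN4
section AN5
variable {n : ℕ} {h : Hessenberg n}

lemma Phi_eq {o : GOrient h} {F : ISF h} (hF : ∀ e, o e ∈ edgeOK F e) : Phi o = F := by
  apply Subtype.ext
  funext j
  show PhiFun o j = F.1 j
  cases hj : F.1 j with
  | none => exact PhiFun_none (noLeft hF hj)
  | some u =>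
    have huL := forest_mem hF hj
    have hL : (leftNbrs o j).Nonempty := ⟨u, huL⟩
    have hru : F.root j = F.root u := root_some F hj
    have hlrv := lrv_eq_root hF
    have humin : u ∈ minSet o j := by
      refine mem_filter.2 ⟨huL, fun y hy => ?_⟩
      rw [hlrv u, ← hru]
      calc F.root j = o.lrv j := (hlrv j).symm
        _ ≤ o.lrv y := lrv_le_left hy
    have hub : ∀ x ∈ minSet o j, u ≤ x := by
      intro x hx
      obtain ⟨hxL, hxmin⟩ := mem_filter.1 hx
      have hxl := mem_leftNbrs.1 hxL
      have he := leftOr_lt hxl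
      have hoe : o ⟨(x, j), he⟩ = true := by rw [← leftOr_eq o he]; exact hxl
      have hmem := hF ⟨(x, j), he⟩
      rw [edgeOK] at hmem
      by_cases hfor : isForest F (⟨(x, j), he⟩ : {e : Fin n × Fin n // e.1 < e.2 ∧ e.2 ≤ h.m e.1})
      · rw [isForest] at hfor
        simp only at hfor
        rw [hj] at hfor
        exact le_of_eq (Option.some_inj.1 hfor)
      · rw [if_neg hfor] at hmem
        by_cases hfree : isFree F (⟨(x, j), he⟩ : {e : Fin n × Fin n // e.1 < e.2 ∧ e.2 ≤ h.m e.1})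
        · rcases hfree with hc1 | ⟨-, u', hu', hu'x⟩
          · exfalso
            simp only at hc1
            have h2 : o.lrv x ≤ o.lrv u := hxmin u huL
            rw [hlrv x, hlrv u, ← hru] at h2
            exact absurd (hc1.trans_le h2) (lt_irrefl _)
          · simp only at hu'
            rw [hj] at hu'
            exact le_of_lt (Option.some_inj.1 hu' ▸ hu'x)
        · rw [if_neg hfree, mem_singleton, hoe] at hmem
          exact absurd hmem (by simp)
    unfold PhiFun
    rw [dif_pos hL]
    congr 1
    exact le_antisymm (min'_le _ _ humin) (hub _ (min'_mem _ _))

lemma mem_edgeOK_phi (o : GOrient h) (e : {e : Fin n × Fin n // e.1 < e.2 ∧ e.2 ≤ h.m e.1}) :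
    o e ∈ edgeOK (Phi o) e := by
  obtain ⟨⟨v, w⟩, he⟩ := e
  rw [edgeOK]
  by_cases hfor : isForest (Phi o) (⟨(v, w), he⟩ : {e : Fin n × Fin n // e.1 < e.2 ∧ e.2 ≤ h.m e.1})
  · rw [if_pos hfor, mem_singleton]
    rw [isForest] at hfor
    have hv := PhiFun_some_mem hfor
    have hvL := (mem_filter.1 hv).1
    have := mem_leftNbrs.1 hvL
    rw [leftOr_eq o he] at this
    exact this
  · rw [if_neg hfor]
    by_cases hfree : isFree (Phi o) (⟨(v, w), he⟩ : {e : Fin n × Fin n // e.1 < e.2 ∧ e.2 ≤ h.m e.1})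
    · rw [if_pos hfree]; exact mem_univ _
    · rw [if_neg hfree, mem_singleton]
      by_contra hoe
      have hoe' : o ⟨(v, w), he⟩ = true := by
        cases hx : o ⟨(v, w), he⟩
        · exact absurd hx hoe
        · rfl
      have hvL : v ∈ leftNbrs o w := by
        rw [mem_leftNbrs, leftOr_eq o he]; exact hoe'
      have hL : (leftNbrs o w).Nonempty := ⟨v, hvL⟩
      have hle : (Phi o).root w ≤ (Phi o).root v := by
        rw [lrv_phi o w, lrv_phi o v]; exact lrv_le_left hvL
      have heq : (Phi o).root v = (Phi o).root w := by
        rcases lt_or_eq_of_le hle with hlt | heq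
        · exact absurd (Or.inl hlt) hfree
        · exact heq.symm
      have hvmin : v ∈ minSet o w := by
        refine mem_filter.2 ⟨hvL, fun y hy => ?_⟩
        rw [← lrv_phi o v, heq, lrv_phi o w]
        exact lrv_le_left hy
      set u := (minSet o w).min' (minSet_nonempty hL) with hu
      have hPw : PhiFun o w = some u := by unfold PhiFun; rw [dif_pos hL]
      have hulev : u ≤ v := min'_le _ _ hvmin
      have huv : u ≠ v := by
        intro hc
        exact hfor (by rw [isForest]; show PhiFun o w = some v; rw [hPw, hc])
      exact hfree (Or.inr ⟨heq, u, hPw, lt_of_le_of_ne hulev huv⟩)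

end AN5
section AN6
variable {n : ℕ} {h : Hessenberg n}

lemma free_not_forest (F : ISF h) (e : {e : Fin n × Fin n // e.1 < e.2 ∧ e.2 ≤ h.m e.1}) :
    isFree F e → ¬ isForest F e := by
  rintro hfree hfor
  rw [isForest] at hfor
  have hroot : F.root e.1.2 = F.root e.1.1 := root_some F hfor
  rcases hfree with hc | ⟨-, u, hu, hux⟩
  · rw [hroot] at hc; exact absurd hc (lt_irrefl _)
  · rw [hfor] at hu
    exact absurd (Option.some_inj.1 hu ▸ hux) (lt_irrefl _)

lemma card_forest (F : ISF h) :
    (univ.filter (isForest F)).card = n - F.roots.card := by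
  have hbij : (univ.filter (isForest F)).card
      = (univ.filter (fun j : Fin n => ¬ F.1 j = none)).card := by
    refine card_bij (fun e _ => e.1.2) ?_ ?_ ?_
    · intro e he
      rw [mem_filter] at he
      rw [mem_filter]
      exact ⟨mem_univ _, by rw [he.2]; simp⟩
    · intro e₁ h₁ e₂ h₂ heq
      rw [mem_filter] at h₁ h₂
      have heq' : e₁.1.2 = e₂.1.2 := heq
      have h₁' : F.1 e₁.1.2 = some e₁.1.1 := h₁.2
      have h₂' : F.1 e₂.1.2 = some e₂.1.1 := h₂.2
      apply Subtype.ext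
      apply Prod.ext
      · rw [heq', h₂'] at h₁'
        exact Option.some_inj.1 h₁'.symm
      · exact heq'
    · intro b hb
      rw [mem_filter] at hb
      cases hu : F.1 b with
      | none => exact absurd hu hb.2
      | some u =>
        exact ⟨⟨(u, b), F.2 b u hu⟩, mem_filter.2 ⟨mem_univ _, hu⟩, rfl⟩
  rw [hbij]
  have hcount := card_filter_add_card_filter_not
    (s := (univ : Finset (Fin n))) (p := fun j => F.1 j = none)
  have hn : (univ : Finset (Fin n)).card = n := card_fin n
  have hroots : F.roots.card = (univ.filter (fun j : Fin n => F.1 j = none)).card := rfl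
  omega

lemma card_inv (F : ISF h) :
    (univ.filter (fun e : {e : Fin n × Fin n // e.1 < e.2 ∧ e.2 ≤ h.m e.1} =>
      F.root e.1.2 < F.root e.1.1)).card = F.inv := by
  rw [ISF.inv]
  refine card_bij (fun e _ => e.1) ?_ ?_ ?_
  · intro e he
    rw [mem_filter] at he ⊢
    exact ⟨mem_univ _, e.2.1, e.2.2, he.2⟩
  · intro e₁ h₁ e₂ h₂ heq
    exact Subtype.ext heq
  · intro p hp
    rw [mem_filter] at hp
    exact ⟨⟨p, hp.2.1, hp.2.2.1⟩, mem_filter.2 ⟨mem_univ _, hp.2.2.2⟩, rfl⟩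

lemma card_len (F : ISF h) :
    (univ.filter (fun e : {e : Fin n × Fin n // e.1 < e.2 ∧ e.2 ≤ h.m e.1} =>
      F.root e.1.1 = F.root e.1.2 ∧ ∃ u, F.1 e.1.2 = some u ∧ u < e.1.1)).card
      = ∑ j, F.edgeLen j := by
  rw [card_eq_sum_card_fiberwise (f := fun e => e.1.2) (t := univ) (fun x _ => mem_univ _)]
  refine Finset.sum_congr rfl (fun j _ => ?_)
  rw [filter_filter]
  cases hj : F.1 j with
  | none =>
    rw [ISF.edgeLen, hj]
    refine Eq.trans (Finset.card_eq_zero.mpr ?_) rfl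
    refine eq_empty_of_forall_notMem (fun e he => ?_)
    rw [mem_filter] at he
    obtain ⟨-, ⟨-, u, hu, -⟩, h2⟩ := he
    rw [h2, hj] at hu
    exact nomatch hu
  | some u =>
    rw [ISF.edgeLen, hj]
    simp only [Option.elim]
    refine card_bij (fun e _ => e.1.1) ?_ ?_ ?_
    · intro e he
      rw [mem_filter] at he
      obtain ⟨-, ⟨hr, u', hu', hu'x⟩, h2⟩ := he
      rw [mem_filter]
      rw [h2] at hr hu'
      rw [hj] at hu'
      have : u' = u := (Option.some_inj.1 hu').symm
      subst this
      exact ⟨mem_univ _, hr, hu'x, h2 ▸ e.2.1⟩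
    · intro e₁ h₁ e₂ h₂ heq
      rw [mem_filter] at h₁ h₂
      apply Subtype.ext
      apply Prod.ext
      · exact heq
      · rw [h₁.2.2, h₂.2.2]
    · intro w hw
      rw [mem_filter] at hw
      obtain ⟨-, hr, huw, hwj⟩ := hw
      have hjm : j ≤ h.m w := le_trans (F.2 j u hj).2 (h.mono (le_of_lt huw))
      exact ⟨⟨(w, j), hwj, hjm⟩, mem_filter.2 ⟨mem_univ _, ⟨hr, u, hj, huw⟩, rfl⟩, rfl⟩

lemma card_free (F : ISF h) :
    (univ.filter (isFree F)).card = F.wt := by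
  have hsplit : univ.filter (isFree F)
      = univ.filter (fun e : {e : Fin n × Fin n // e.1 < e.2 ∧ e.2 ≤ h.m e.1} =>
          F.root e.1.2 < F.root e.1.1)
        ∪ univ.filter (fun e => F.root e.1.1 = F.root e.1.2 ∧ ∃ u, F.1 e.1.2 = some u ∧ u < e.1.1) := by
    rw [← filter_or]
    rfl
  rw [hsplit, card_union_of_disjoint, card_inv, card_len, ISF.wt]
  rw [disjoint_left]
  intro e h1 h2
  rw [mem_filter] at h1 h2
  rw [h2.2.1] at h1
  exact absurd h1.2 (lt_irrefl _)

end AN6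
section AN7
variable {n : ℕ} {h : Hessenberg n}

lemma fiber_eq (F : ISF h) :
    (univ.filter (fun o : GOrient h => Phi o = F))
      = Fintype.piFinset (fun e => edgeOK F e) := by
  ext o
  rw [mem_filter]
  refine Iff.trans ?_ (Fintype.mem_piFinset (f := o)).symm
  constructor
  · rintro ⟨-, rfl⟩
    exact mem_edgeOK_phi o
  · intro hF
    exact ⟨mem_univ _, Phi_eq hF⟩

lemma fiber_sum (F : ISF h) :
    ∑ o ∈ univ.filter (fun o : GOrient h => Phi o = F),
        (Polynomial.X : Polynomial ℤ) ^ o.wtO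
      = (Polynomial.X : Polynomial ℤ) ^ (n - F.roots.card)
          * ((Polynomial.X : Polynomial ℤ) + 1) ^ F.wt := by
  have step1 : ∑ o ∈ univ.filter (fun o : GOrient h => Phi o = F),
        (Polynomial.X : Polynomial ℤ) ^ o.wtO
      = ∑ o ∈ Fintype.piFinset (fun e => edgeOK F e),
          ∏ e, (cond (o e) (Polynomial.X : Polynomial ℤ) 1) := by
    rw [fiber_eq]
    refine Finset.sum_congr rfl (fun o _ => ?_)
    rw [GOrient.wtO, ← prod_const, prod_filter]
    refine Finset.prod_congr rfl (fun e _ => ?_)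
    cases o e <;> simp
  rw [step1]
  rw [← Finset.prod_univ_sum (fun e => edgeOK F e)
    (fun _ b => cond b (Polynomial.X : Polynomial ℤ) 1)]
  have hfac : ∀ e, (∑ b ∈ edgeOK F e, cond b (Polynomial.X : Polynomial ℤ) 1)
      = if isForest F e then (Polynomial.X : Polynomial ℤ)
        else if isFree F e then (Polynomial.X : Polynomial ℤ) + 1 else 1 := by
    intro e
    rw [edgeOK]
    split_ifs with h1 h2
    · simp
    · rw [Fintype.sum_bool]; simp
    · simp
  rw [Finset.prod_congr rfl (fun e _ => hfac e), prod_ite, prod_const, card_forest]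
  congr 1
  rw [prod_ite, prod_const, prod_const_one, mul_one, filter_filter]
  have hff : univ.filter (fun e : {e : Fin n × Fin n // e.1 < e.2 ∧ e.2 ≤ h.m e.1} =>
      ¬ isForest F e ∧ isFree F e) = univ.filter (isFree F) := by
    refine filter_congr (fun e _ => ?_)
    constructor
    · exact fun he => he.2
    · exact fun he => ⟨free_not_forest F e he, he⟩
  rw [hff, card_free]

lemma oParts_eq (o : GOrient h) : o.oParts = (Phi o).parts := by
  have hfun : o.lrv = (Phi o).root := funext fun v => (lrv_phi o v).symm
  rw [GOrient.oParts, ISF.parts]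
  simp only [hfun]
  have hset : (univ.filter (fun u : Fin n => ∃ v, (Phi o).root v = u)) = (Phi o).roots := by
    ext u
    rw [ISF.roots, mem_filter, mem_filter]
    constructor
    · rintro ⟨-, v, rfl⟩
      exact ⟨mem_univ _, root_isRoot (Phi o) v⟩
    · rintro ⟨-, hu⟩
      exact ⟨mem_univ _, u, root_none (Phi o) hu⟩
  rw [hset]
  rfl

end AN7

/-- For every partition `μ` of `n`, in `ℤ[q]`:
`Σ_{o : λ(o) = μ} q^{wt(o)} = Σ_{F : λ(F) = μ} q^{n - ℓ(μ)} (q+1)^{wt_m(F)}`,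
where `o` runs over the orientations of `G_m` and `F` over its increasing
spanning forests. -/
theorem sum_orientations_eq_sum_forests (n : ℕ) (hn : 1 ≤ n) (h : Hessenberg n)
    (μ : Nat.Partition n) :
    ∑ o ∈ Finset.univ.filter (fun o : GOrient h => o.oParts = μ.parts),
        (Polynomial.X : Polynomial ℤ) ^ o.wtO
      = ∑ F ∈ Finset.univ.filter (fun F : ISF h => F.parts = μ.parts),
          (Polynomial.X : Polynomial ℤ) ^ (n - Multiset.card μ.parts) *
            ((Polynomial.X : Polynomial ℤ) + 1) ^ F.wt := by
  have hset : univ.filter (fun o : GOrient h => o.oParts = μ.parts)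
      = univ.filter (fun o : GOrient h => (Phi o).parts = μ.parts) :=
    filter_congr (fun o _ => by rw [oParts_eq])
  rw [hset]
  rw [← Finset.sum_fiberwise_of_maps_to (g := Phi)
      (t := univ.filter (fun F : ISF h => F.parts = μ.parts))
      (fun o ho => mem_filter.2 ⟨mem_univ _, (mem_filter.1 ho).2⟩)
      (fun o => (Polynomial.X : Polynomial ℤ) ^ o.wtO)]
  refine Finset.sum_congr rfl (fun F hF => ?_)
  have hFparts := (mem_filter.1 hF).2
  have hinner : (univ.filter (fun o : GOrient h => (Phi o).parts = μ.parts)).filter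
      (fun o => Phi o = F) = univ.filter (fun o : GOrient h => Phi o = F) := by
    rw [filter_filter]
    refine filter_congr (fun o _ => ?_)
    constructor
    · exact fun hc => hc.2
    · intro hc; exact ⟨by rw [hc, hFparts], hc⟩
  rw [hinner, fiber_sum]
  have hcard : F.roots.card = Multiset.card μ.parts := by
    rw [← hFparts, ISF.parts, Multiset.card_map]
    rfl
  rw [hcard]
end

section
/- Let n ≥ 1 and let m be a Hessenberg function on {1,…,n}. Then the number of permutations σ ∈ S_n with σ ≤ m and the number of increasing spanning forests of G_m are both equal to Π_{i=1}^n (m(i) − i + 1). -/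
open Finset

def Hessenberg.tail {n : ℕ} (h : Hessenberg (n+1)) : Hessenberg n where
  m i := ⟨(h.m i.succ : ℕ) - 1, by
    have h1 : ((i.succ : Fin (n+1)) : ℕ) ≤ (h.m i.succ : ℕ) := h.le_m i.succ
    have h2 : (h.m i.succ : ℕ) < n + 1 := (h.m i.succ).isLt
    have h3 : (0:ℕ) < n := i.pos
    have h4 : ((i.succ : Fin (n+1)) : ℕ) = (i : ℕ) + 1 := rfl
    omega⟩
  mono := by
    intro a b hab
    have : h.m a.succ ≤ h.m b.succ := h.mono (Fin.succ_le_succ_iff.mpr hab)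
    simp only [Fin.le_def] at this ⊢
    omega
  le_m := by
    intro i
    have h1 : ((i.succ : Fin (n+1)) : ℕ) ≤ (h.m i.succ : ℕ) := h.le_m i.succ
    have h4 : ((i.succ : Fin (n+1)) : ℕ) = (i : ℕ) + 1 := rfl
    simp only [Fin.le_def]
    omega

lemma Hessenberg.tail_val {n : ℕ} (h : Hessenberg (n+1)) (i : Fin n) :
    (h.tail.m i : ℕ) = (h.m i.succ : ℕ) - 1 := rfl

lemma Hessenberg.succ_le_m_succ {n : ℕ} (h : Hessenberg (n+1)) (i : Fin n) :
    (i : ℕ) + 1 ≤ (h.m i.succ : ℕ) := by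
  have h1 : ((i.succ : Fin (n+1)) : ℕ) ≤ (h.m i.succ : ℕ) := h.le_m i.succ
  simpa using h1

lemma Hessenberg.prod_succ {n : ℕ} (h : Hessenberg (n+1)) :
    ∏ i : Fin (n+1), ((h.m i : ℕ) - (i : ℕ) + 1)
      = ((h.m 0 : ℕ) + 1) * ∏ i : Fin n, ((h.tail.m i : ℕ) - (i : ℕ) + 1) := by
  have key : ∀ i : Fin n,
      (h.m i.succ : ℕ) - ((i.succ : Fin (n+1)) : ℕ) + 1 = (h.tail.m i : ℕ) - (i : ℕ) + 1 := by
    intro i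
    have := h.succ_le_m_succ i
    have h4 : ((i.succ : Fin (n+1)) : ℕ) = (i : ℕ) + 1 := rfl
    rw [Hessenberg.tail_val, h4]
    omega
  rw [Fin.prod_univ_succ, Finset.prod_congr rfl (fun i _ => key i)]
  simp

lemma permCard (n : ℕ) (h : Hessenberg n) :
    (univ.filter (fun σ : Equiv.Perm (Fin n) => ∀ i, σ i ≤ h.m i)).card
      = ∏ i : Fin n, ((h.m i : ℕ) - (i : ℕ) + 1) := by
  induction n with
  | zero =>
    rw [Finset.filter_true_of_mem (fun σ _ => fun i => i.elim0)]
    simp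
  | succ n ih =>
    rw [← Fintype.card_subtype]
    have key : ∀ x : Fin (n+1) × Equiv.Perm (Fin n),
        (∀ i, (Equiv.Perm.decomposeFin.symm x) i ≤ h.m i) ↔
          (x.1 ≤ h.m 0 ∧ ∀ i, x.2 i ≤ h.tail.m i) := by
      rintro ⟨p, e⟩
      constructor
      · intro H
        have hp : p ≤ h.m 0 := by
          have := H 0
          rwa [Equiv.Perm.decomposeFin_symm_apply_zero] at this
        refine ⟨hp, fun i => ?_⟩
        have hi := H i.succ
        rw [Equiv.Perm.decomposeFin_symm_apply_succ] at hi
        have goal_iff : (e i ≤ h.tail.m i) ↔ ((e i : ℕ) + 1 ≤ (h.m i.succ : ℕ)) := by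
          rw [Fin.le_def, Hessenberg.tail_val]
          have := h.succ_le_m_succ i
          omega
        rw [goal_iff]
        by_cases hep : ((e i).succ : Fin (n+1)) = p
        · have : ((e i).succ : Fin (n+1)) ≤ h.m i.succ := by
            calc ((e i).succ : Fin (n+1)) = p := hep
            _ ≤ h.m 0 := hp
            _ ≤ h.m i.succ := h.mono (Fin.zero_le _)
          simpa [Fin.le_def, Fin.val_succ] using this
        · rw [Equiv.swap_apply_of_ne_of_ne (Fin.succ_ne_zero _) hep] at hi
          simpa [Fin.le_def, Fin.val_succ] using hi
      · rintro ⟨hp, he⟩ i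
        induction i using Fin.cases with
        | zero => rwa [Equiv.Perm.decomposeFin_symm_apply_zero]
        | succ i =>
          rw [Equiv.Perm.decomposeFin_symm_apply_succ]
          by_cases hep : ((e i).succ : Fin (n+1)) = p
          · rw [hep, Equiv.swap_apply_right]
            exact Fin.zero_le _
          · rw [Equiv.swap_apply_of_ne_of_ne (Fin.succ_ne_zero _) hep]
            have h5 : ((e i) : ℕ) ≤ (h.tail.m i : ℕ) := Fin.le_def.mp (he i)
            rw [Hessenberg.tail_val] at h5
            have h2 := h.succ_le_m_succ i
            rw [Fin.le_def]
            simp only [Fin.val_succ]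
            omega
    have e1 : {σ : Equiv.Perm (Fin (n+1)) // ∀ i, σ i ≤ h.m i}
        ≃ {x : Fin (n+1) × Equiv.Perm (Fin n) // x.1 ≤ h.m 0 ∧ ∀ i, x.2 i ≤ h.tail.m i} :=
      Equiv.Perm.decomposeFin.subtypeEquiv (fun σ => by
        have := key (Equiv.Perm.decomposeFin σ)
        rwa [Equiv.symm_apply_apply] at this)
    have e2 : {x : Fin (n+1) × Equiv.Perm (Fin n) // x.1 ≤ h.m 0 ∧ ∀ i, x.2 i ≤ h.tail.m i}
        ≃ {p : Fin (n+1) // p ≤ h.m 0} × {e : Equiv.Perm (Fin n) // ∀ i, e i ≤ h.tail.m i} :=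
      Equiv.subtypeProdEquivProd
        (p := fun p : Fin (n+1) => p ≤ h.m 0)
        (q := fun e : Equiv.Perm (Fin n) => ∀ i, e i ≤ h.tail.m i)
    rw [Fintype.card_congr (e1.trans e2), Fintype.card_prod]
    have c1 : Fintype.card {p : Fin (n+1) // p ≤ h.m 0} = (h.m 0 : ℕ) + 1 := by
      rw [Fintype.card_subtype]
      have : univ.filter (fun p : Fin (n+1) => p ≤ h.m 0) = Finset.Iic (h.m 0) := by
        ext x; simp
      rw [this, Fin.card_Iic]
    rw [c1, Fintype.card_subtype, ih h.tail, Hessenberg.prod_succ]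

-- ISF side
lemma fact_aux : ∀ t : ℕ, (t+1) * ∏ k ∈ range t, (k+1) = ∏ k ∈ range t, (k+2)
  | 0 => by simp
  | (t+1) => by
    rw [Finset.prod_range_succ, Finset.prod_range_succ, ← fact_aux t]
    ring

lemma prod_fin_filter_lt {n t : ℕ} (ht : t ≤ n) (g : ℕ → ℕ) :
    ∏ i ∈ univ.filter (fun i : Fin n => (i : ℕ) < t), g (i : ℕ) = ∏ k ∈ range t, g k := by
  refine Finset.prod_bij' (fun i _ => (i : ℕ))
    (fun k hk => ⟨k, by simp at hk; omega⟩) ?_ ?_ ?_ ?_ ?_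
  · intro a ha; simp at ha ⊢; omega
  · intro k hk; simp at hk ⊢; omega
  · intro a ha; rfl
  · intro k hk; rfl
  · intro a ha; rfl

lemma isfProd (n : ℕ) (h : Hessenberg n) :
    ∏ j : Fin n, ((univ.filter (fun u => u < j ∧ j ≤ h.m u)).card + 1)
      = ∏ i : Fin n, ((h.m i : ℕ) - (i : ℕ) + 1) := by
  induction n with
  | zero => simp
  | succ n ih =>
    rw [Hessenberg.prod_succ, ← ih h.tail, Fin.prod_univ_succ]
    have c0 : (univ.filter (fun u : Fin (n+1) => u < 0 ∧ (0:Fin (n+1)) ≤ h.m u)).card = 0 := by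
      simp [Finset.filter_eq_empty_iff]
    rw [c0]
    set t := (h.m 0 : ℕ) with ht_def
    have ht : t ≤ n := by
      have h2 : t < n + 1 := (h.m 0).isLt
      omega
    have factor : ∀ i : Fin n,
        (univ.filter (fun u : Fin (n+1) => u < i.succ ∧ i.succ ≤ h.m u)).card
          = (univ.filter (fun v : Fin n => v < i ∧ i ≤ h.tail.m v)).card
            + (if (i : ℕ) < t then 1 else 0) := by
      intro i
      rw [Finset.card_filter, Fin.sum_univ_succ, Finset.card_filter]
      have h0 : ((0 : Fin (n+1)) < i.succ ∧ i.succ ≤ h.m 0) ↔ ((i : ℕ) < t) := by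
        rw [Fin.le_def]
        simp only [Fin.succ_pos, true_and, Fin.val_succ]
        omega
      have hsucc : ∀ v : Fin n,
          ((v.succ : Fin (n+1)) < i.succ ∧ i.succ ≤ h.m v.succ) ↔ (v < i ∧ i ≤ h.tail.m v) := by
        intro v
        have h2 := h.succ_le_m_succ v
        simp only [Fin.lt_def, Fin.le_def, Fin.val_succ, Hessenberg.tail_val]
        omega
      rw [if_congr h0 rfl rfl,
        Finset.sum_congr rfl (fun v _ => if_congr (hsucc v) rfl rfl)]
      omega
    simp only [factor]
    set a : Fin n → ℕ :=
      fun i => (univ.filter (fun v : Fin n => v < i ∧ i ≤ h.tail.m v)).card + 1 with ha_def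
    have akey : ∀ i : Fin n, (i : ℕ) < t → a i = (i : ℕ) + 1 := by
      intro i hi
      rw [ha_def]
      simp only
      congr 1
      have : univ.filter (fun v : Fin n => v < i ∧ i ≤ h.tail.m v) = Finset.Iio i := by
        ext v
        simp only [Finset.mem_filter, Finset.mem_univ, true_and, Finset.mem_Iio,
          and_iff_left_iff_imp]
        intro _
        rw [Fin.le_def, Hessenberg.tail_val]
        have h2 := h.succ_le_m_succ v
        have h3 : (h.m 0 : ℕ) ≤ (h.m v.succ : ℕ) := h.mono (Fin.zero_le _)
        omega
      rw [this, Fin.card_Iio]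
    -- goal: (0+1) * ∏ i, (c' i + ite + 1) = (t+1) * ∏ i, a i
    have lhs : ∏ i : Fin n,
        ((univ.filter (fun v : Fin n => v < i ∧ i ≤ h.tail.m v)).card
          + (if (i : ℕ) < t then 1 else 0) + 1)
        = (t + 1) * ∏ i : Fin n, a i := by
      rw [← Finset.prod_filter_mul_prod_filter_not univ (fun i : Fin n => (i : ℕ) < t),
          ← Finset.prod_filter_mul_prod_filter_not univ (fun i : Fin n => (i : ℕ) < t) a]
      have p1 : ∏ i ∈ univ.filter (fun i : Fin n => (i : ℕ) < t),
          ((univ.filter (fun v : Fin n => v < i ∧ i ≤ h.tail.m v)).card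
            + (if (i : ℕ) < t then 1 else 0) + 1)
          = ∏ k ∈ range t, (k + 2) := by
        rw [← prod_fin_filter_lt ht (fun k => k + 2)]
        apply Finset.prod_congr rfl
        intro i hi
        simp only [Finset.mem_filter] at hi
        have := akey i hi.2
        rw [ha_def] at this
        simp only at this
        rw [if_pos hi.2]
        omega
      have p2 : ∏ i ∈ univ.filter (fun i : Fin n => (i : ℕ) < t), a i
          = ∏ k ∈ range t, (k + 1) := by
        rw [← prod_fin_filter_lt ht (fun k => k + 1)]
        exact Finset.prod_congr rfl (fun i hi => akey i (by simpa using (Finset.mem_filter.mp hi).2))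
      have p3 : ∏ i ∈ univ.filter (fun i : Fin n => ¬ (i : ℕ) < t),
          ((univ.filter (fun v : Fin n => v < i ∧ i ≤ h.tail.m v)).card
            + (if (i : ℕ) < t then 1 else 0) + 1)
          = ∏ i ∈ univ.filter (fun i : Fin n => ¬ (i : ℕ) < t), a i := by
        apply Finset.prod_congr rfl
        intro i hi
        simp only [Finset.mem_filter] at hi
        rw [if_neg hi.2, ha_def]
      rw [p1, p2, p3, ← mul_assoc, ← fact_aux t]
    rw [lhs]; ring

lemma isfCard (n : ℕ) (h : Hessenberg n) :
    Fintype.card (ISF h)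
      = ∏ j : Fin n, ((univ.filter (fun u : Fin n => u < j ∧ j ≤ h.m u)).card + 1) := by
  have e0 : ISF h ≃ ∀ j : Fin n, {o : Option (Fin n) // ∀ u, o = some u → u < j ∧ j ≤ h.m u} :=
    by unfold ISF; exact Equiv.subtypePiEquivPi (p := fun (j : Fin n) (o : Option (Fin n)) => ∀ u, o = some u → u < j ∧ j ≤ h.m u)
  have e1 : ∀ j : Fin n, {o : Option (Fin n) // ∀ u, o = some u → u < j ∧ j ≤ h.m u}
      ≃ Option {u : Fin n // u < j ∧ j ≤ h.m u} := fun j =>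
    { toFun := fun x => Option.pmap (fun u hu => ⟨u, hu⟩) x.1 (fun u hu => x.2 u hu)
      invFun := fun o => ⟨o.map Subtype.val, by
        intro u hu
        cases o with
        | none => simp at hu
        | some v =>
          obtain rfl : (v : Fin n) = u := Option.some.inj (by simpa using hu)
          exact v.2⟩
      left_inv := fun x => by
        rcases x with ⟨o, ho⟩
        cases o <;> rfl
      right_inv := fun o => by
        cases o with
        | none => rfl
        | some v => rfl }
  rw [Fintype.card_congr (e0.trans (Equiv.piCongrRight e1)), Fintype.card_pi]
  apply Finset.prod_congr rfl
  intro j _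
  rw [Fintype.card_option, Fintype.card_subtype]


/-- The number of permutations `σ` with `σ ≤ m` and the number of
increasing spanning forests of `G_m` are both `Π_{i=1}^n (m(i) - i + 1)`.  (0-indexed:
the 1-indexed quantity `m(i) - i + 1` equals `(m.m i : ℕ) - (i : ℕ) + 1`.) -/
theorem card_perms_and_card_isf (n : ℕ) (hn : 1 ≤ n) (h : Hessenberg n) :
    (Finset.univ.filter (fun σ : Equiv.Perm (Fin n) => ∀ i, σ i ≤ h.m i)).card
        = ∏ i : Fin n, ((h.m i : ℕ) - (i : ℕ) + 1)
    ∧ Fintype.card (ISF h) = ∏ i : Fin n, ((h.m i : ℕ) - (i : ℕ) + 1) := by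
  exact ⟨permCard n h, by rw [isfCard n h]; exact isfProd n h⟩
end

section
/- Let R be a commutative ring, q ∈ R, and let h, ρ : ℕ → R satisfy h(0) = 1 and, for every k ≥ 1, [k]_q · h(k) = Σ_{j=1}^{k} h(k−j) · ρ(j). Then for every n ≥ 1, n!_q · h(n) equals the determinant of the n × n matrix M with entries M_{1,j} = ρ(j) for 1 ≤ j ≤ n, and for 2 ≤ i ≤ n: M_{i,i−1} = −[i−1]_q, M_{i,j} = ρ(j−i+1) for j ≥ i, and M_{i,j} = 0 for j < i−1. -/
open Finset

section Aux

variable {R : Type*} [CommRing R] (q : R) (ρ : ℕ → R)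

/-- entry function of the matrix, as a function on `ℕ`. -/
def aEnt (i j : ℕ) : R :=
  if i ≤ j then ρ (j - i + 1) else if j + 1 = i then -(qInt q i) else 0

/-- the canonical matrix of size `n`. -/
def Mmat (n : ℕ) : Matrix (Fin n) (Fin n) R :=
  Matrix.of fun i j => aEnt q ρ i j

lemma qFact_eq_Icc (m : ℕ) : qFact q m = ∏ k ∈ Icc 1 m, qInt q k := by
  induction m with
  | zero => simp [qFact]
  | succ m ih =>
      rw [qFact, Finset.prod_range_succ, ← qFact, ih,
        Finset.prod_Icc_succ_top (by omega)]

lemma succAbove_cast_val {n : ℕ} (i : Fin (n+2)) (hi : (i : ℕ) ≤ n)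
    (k : Fin n) :
    ((i.succAbove k.castSucc : Fin (n+2)) : ℕ)
      = (((⟨(i : ℕ), by omega⟩ : Fin (n+1)).succAbove k : Fin (n+1)) : ℕ) := by
  simp only [Fin.succAbove, Fin.lt_def, Fin.coe_castSucc]
  split_ifs <;> simp_all

lemma minor_det : ∀ (n : ℕ) (i : Fin (n+1)),
    ((Mmat q ρ (n+1)).submatrix i.succAbove Fin.castSucc).det
      = (Mmat q ρ (i : ℕ)).det * ∏ k ∈ Icc ((i : ℕ)+1) n, (-(qInt q k)) := by
  intro n
  induction n with
  | zero =>
      intro i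
      have h0 : (i : ℕ) = 0 := by omega
      haveI : IsEmpty (Fin (i : ℕ)) := by rw [h0]; infer_instance
      simp [Matrix.det_isEmpty, h0]
  | succ n ih =>
      intro i
      by_cases hi : i = Fin.last (n+1)
      · subst hi
        have he : ((Mmat q ρ (n+2)).submatrix (Fin.last (n+1)).succAbove
            Fin.castSucc) = Mmat q ρ (n+1) := by
          ext k l
          simp [Fin.succAbove_last, Mmat, Matrix.submatrix_apply]
        rw [he]
        simp [Fin.val_last]
      · have hile : (i : ℕ) ≤ n := by
          have h1 := i.isLt
          have h2 : (i : ℕ) ≠ n + 1 := fun hc => hi (Fin.ext hc)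
          omega
        set N := (Mmat q ρ (n+2)).submatrix i.succAbove Fin.castSucc with hN
        rw [Matrix.det_succ_row N (Fin.last n)]
        have hA : ((i.succAbove (Fin.last n)) : ℕ) = n + 1 := by
          unfold Fin.succAbove
          rw [apply_ite Fin.val]
          simp only [Fin.coe_castSucc, Fin.val_last, Fin.val_succ, Fin.lt_def]
          rw [if_neg (by omega)]
        have hrow : ∀ j : Fin (n+1), j ≠ Fin.last n →
            (-1 : R) ^ (((Fin.last n : Fin (n+1)) : ℕ) + (j : ℕ)) *
              N (Fin.last n) j *
              ((N.submatrix (Fin.last n).succAbove j.succAbove).det) = 0 := by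
          intro j hj
          have hjn : (j : ℕ) ≤ n ∧ (j : ℕ) ≠ n := by
            have h1 := j.isLt
            have h2 : (j : ℕ) ≠ n := fun hc => hj (Fin.ext hc)
            omega
          have hz : N (Fin.last n) j = 0 := by
            simp only [hN, Matrix.submatrix_apply, Mmat, Matrix.of_apply, aEnt, hA]
            rw [if_neg, if_neg]
            · simp only [Fin.coe_castSucc]; omega
            · simp only [Fin.coe_castSucc]; omega
          rw [hz]; ring
        rw [Finset.sum_eq_single (Fin.last n) (fun j _ hj => hrow j hj)
          (fun hm => absurd (Finset.mem_univ _) hm)]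
        have hval : N (Fin.last n) (Fin.last n) = -(qInt q (n+1)) := by
          simp only [hN, Matrix.submatrix_apply, Mmat, Matrix.of_apply, aEnt, hA]
          rw [if_neg, if_pos]
          · simp only [Fin.coe_castSucc, Fin.val_last]
          · simp only [Fin.coe_castSucc, Fin.val_last]; omega
        set i' : Fin (n+1) := ⟨(i : ℕ), by omega⟩ with hi'
        have hsub : N.submatrix (Fin.last n).succAbove (Fin.last n).succAbove
            = (Mmat q ρ (n+1)).submatrix i'.succAbove Fin.castSucc := by
          ext k l
          simp only [hN, Matrix.submatrix_apply, Fin.succAbove_last, Mmat,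
            Matrix.of_apply, Fin.coe_castSucc]
          rw [succAbove_cast_val i hile k]
        have hsgn : (-1 : R) ^ (((Fin.last n : Fin (n+1)) : ℕ)
            + ((Fin.last n : Fin (n+1)) : ℕ)) = 1 := by
          rw [Fin.val_last]
          exact Even.neg_one_pow ⟨n, rfl⟩
        rw [hval, hsub, ih i', hsgn, one_mul]
        have hprod : ∏ k ∈ Icc ((i : ℕ)+1) (n+1), (-(qInt q k))
            = (∏ k ∈ Icc ((i : ℕ)+1) n, (-(qInt q k))) * (-(qInt q (n+1))) :=
          Finset.prod_Icc_succ_top (by omega) _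
        have hii' : (i' : ℕ) = (i : ℕ) := rfl
        rw [hii', hprod]
        ring

lemma det_Mmat (h : ℕ → R) (h0 : h 0 = 1)
    (hrec : ∀ k : ℕ, 1 ≤ k → qInt q k * h k = ∑ j ∈ Finset.Icc 1 k, h (k - j) * ρ j) :
    ∀ n : ℕ, (Mmat q ρ n).det = qFact q n * h n := by
  intro n
  induction n using Nat.strong_induction_on with
  | _ n IH =>
    obtain _ | m := n
    · simp [qFact, h0, Matrix.det_isEmpty]
    · rw [Matrix.det_succ_column (Mmat q ρ (m+1)) (Fin.last m)]
      have hterm : ∀ i : Fin (m+1),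
          (-1 : R) ^ ((i : ℕ) + ((Fin.last m : Fin (m+1)) : ℕ)) *
            (Mmat q ρ (m+1)) i (Fin.last m) *
            ((Mmat q ρ (m+1)).submatrix i.succAbove (Fin.last m).succAbove).det
          = qFact q m * (h (i : ℕ) * ρ (m - (i : ℕ) + 1)) := by
        intro i
        have hile : (i : ℕ) ≤ m := by omega
        rw [Fin.succAbove_last, minor_det, IH (i : ℕ) (by omega)]
        have hent : (Mmat q ρ (m+1)) i (Fin.last m) = ρ (m - (i : ℕ) + 1) := by
          simp only [Mmat, Matrix.of_apply, aEnt, Fin.val_last]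
          rw [if_pos hile]
        have hprodneg : ∏ k ∈ Icc ((i : ℕ)+1) m, (-(qInt q k))
            = (-1 : R) ^ (m - (i : ℕ)) * ∏ k ∈ Icc ((i : ℕ)+1) m, qInt q k := by
          calc ∏ k ∈ Icc ((i : ℕ)+1) m, (-(qInt q k))
              = ∏ k ∈ Icc ((i : ℕ)+1) m, ((-1) * qInt q k) :=
                Finset.prod_congr rfl (fun k _ => by ring)
            _ = ((-1 : R) ^ (Icc ((i : ℕ)+1) m).card) * ∏ k ∈ Icc ((i : ℕ)+1) m, qInt q k := by
                rw [Finset.prod_mul_distrib, Finset.prod_const]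
            _ = _ := by rw [Nat.card_Icc]; congr 2; omega
        have hsgn : (-1 : R) ^ ((i : ℕ) + m) * (-1 : R) ^ (m - (i : ℕ)) = 1 := by
          rw [← pow_add, show (i : ℕ) + m + (m - (i : ℕ)) = m + m by omega]
          exact Even.neg_one_pow ⟨m, rfl⟩
        have hq : qFact q (i : ℕ) * ∏ k ∈ Icc ((i : ℕ)+1) m, qInt q k = qFact q m := by
          rw [qFact_eq_Icc, qFact_eq_Icc,
            show Icc 1 (i : ℕ) = Ioc 0 (i : ℕ) from Finset.Icc_add_one_left_eq_Ioc 0 _,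
            show Icc ((i : ℕ)+1) m = Ioc (i : ℕ) m from Finset.Icc_add_one_left_eq_Ioc _ _,
            show Icc 1 m = Ioc 0 m from Finset.Icc_add_one_left_eq_Ioc 0 _]
          exact Finset.prod_Ioc_consecutive _ (Nat.zero_le _) hile
        rw [hent, hprodneg, Fin.val_last]
        calc (-1 : R) ^ ((i : ℕ) + m) * ρ (m - (i : ℕ) + 1) *
              (qFact q (i : ℕ) * h (i : ℕ) *
                ((-1 : R) ^ (m - (i : ℕ)) * ∏ k ∈ Icc ((i : ℕ)+1) m, qInt q k))
            = ((-1 : R) ^ ((i : ℕ) + m) * (-1 : R) ^ (m - (i : ℕ))) *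
                ((qFact q (i : ℕ) * ∏ k ∈ Icc ((i : ℕ)+1) m, qInt q k) *
                  (h (i : ℕ) * ρ (m - (i : ℕ) + 1))) := by ring
          _ = qFact q m * (h (i : ℕ) * ρ (m - (i : ℕ) + 1)) := by
              rw [hsgn, hq, one_mul]
      rw [Finset.sum_congr rfl (fun i _ => hterm i), ← Finset.mul_sum]
      have hsum1 : ∑ i : Fin (m+1), h (i : ℕ) * ρ (m - (i : ℕ) + 1)
          = ∑ i ∈ range (m+1), h i * ρ (m - i + 1) :=
        Fin.sum_univ_eq_sum_range (fun i => h i * ρ (m - i + 1)) (m+1)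
      have hsum2 : ∑ i ∈ range (m+1), h i * ρ (m - i + 1)
          = ∑ j ∈ range (m+1), h (m - j) * ρ (j + 1) := by
        rw [← Finset.sum_range_reflect (fun i => h (m - i) * ρ (i + 1)) (m+1)]
        refine Finset.sum_congr rfl (fun j hj => ?_)
        have hjm : j ≤ m := by
          simpa [Nat.lt_succ_iff] using Finset.mem_range.mp hj
        congr 2 <;> omega
      have hsum3 : ∑ j ∈ Finset.Icc 1 (m+1), h (m+1 - j) * ρ j
          = ∑ j ∈ range (m+1), h (m - j) * ρ (j + 1) := by
        rw [show Finset.Icc 1 (m+1) = Finset.Ico 1 (m+2) by exact (Finset.Ico_add_one_right_eq_Icc 1 (m+1)).symm,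
          Finset.sum_Ico_eq_sum_range]
        refine Finset.sum_congr (by norm_num) (fun j hj => ?_)
        have hjm : j < m + 1 := Finset.mem_range.mp hj
        congr 2 <;> omega
      rw [hsum1, hsum2, ← hsum3, ← hrec (m+1) (by omega)]
      have hqf : qFact q (m+1) = qFact q m * qInt q (m+1) := Finset.prod_range_succ _ _
      rw [hqf]
      ring

end Aux

/-- If `h 0 = 1` and `[k]_q h(k) = Σ_{j=1}^k h(k-j) ρ(j)` for all `k ≥ 1`,
then `n!_q · h(n)` is the determinant of the matrix `M` (stated here 0-indexed: row `i`,
column `j` of `M` correspond to row `i+1`, column `j+1` of the matrix in the paper). -/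
theorem qfact_h_eq_det (R : Type*) [CommRing R] (q : R) (h ρ : ℕ → R)
    (h0 : h 0 = 1)
    (hrec : ∀ k : ℕ, 1 ≤ k → qInt q k * h k = ∑ j ∈ Finset.Icc 1 k, h (k - j) * ρ j)
    (n : ℕ) (hn : 1 ≤ n) (M : Matrix (Fin n) (Fin n) R)
    (hM : ∀ i j : Fin n, M i j =
      if (i : ℕ) ≤ (j : ℕ) then ρ ((j : ℕ) - (i : ℕ) + 1)
      else if (j : ℕ) + 1 = (i : ℕ) then -(qInt q (i : ℕ)) else 0) :
    qFact q n * h n = M.det := by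
  have hMm : M = Mmat q ρ n := by
    ext i j
    rw [hM]
    rfl
  rw [hMm, det_Mmat q ρ h h0 hrec n]
end

section
/- Let R be a commutative ring, q ∈ R, and let h, ρ : ℕ → R satisfy h(0) = 1 and, for every k ≥ 1, [k]_q · h(k) = Σ_{j=1}^{k} h(k−j) · ρ(j). For partitions λ, μ of n set ρ_λ := Π_i ρ(λ_i) and h_μ := Π_j h(μ_j). Then for every partition λ of n: ρ_λ = Σ_{μ ⊢ n} (−1)^{ℓ(λ)−ℓ(μ)} · w_{λμ} · h_μ, where w_{λμ} ∈ R is the sum, over all domino tabloids of shape λ and type μ, of their q-weights. -/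
open Finset

section Aux
variable {R : Type*} [CommRing R]

lemma comp_tail_sum {k : ℕ} (c : Composition k) :
    c.blocks.headI + c.blocks.tail.sum = k := by
  have hs := c.blocks_sum
  cases hb : c.blocks with
  | nil => rw [hb] at hs; simpa using hs.symm ▸ (by simp : ([] : List ℕ).headI + ([] : List ℕ).tail.sum = 0)
  | cons a t => rw [hb] at hs; simpa using hs

lemma comp_headI_pos {k : ℕ} (hk : 1 ≤ k) (c : Composition k) :
    0 < c.blocks.headI := by
  have hne : c.blocks ≠ [] := by
    intro hnil
    have hs := c.blocks_sum
    rw [hnil] at hs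
    simp at hs
    omega
  have hmem : c.blocks.headI ∈ c.blocks := by
    cases hb : c.blocks with
    | nil => exact absurd hb hne
    | cons a t => simp [hb]
  exact c.blocks_pos hmem

/-- Attach a block of size `p.1` in front of a composition of `k - p.1`. -/
def consC {k : ℕ} (p : Σ b : ℕ, Composition (k - b)) : Composition k :=
  if hb : 1 ≤ p.1 ∧ p.1 ≤ k then
    ⟨p.1 :: p.2.blocks,
      fun {i} hi => by
        rcases List.mem_cons.mp hi with h | h
        · omega
        · exact p.2.blocks_pos h,
      by have := p.2.blocks_sum; simp [this]; omega⟩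
  else Composition.ones k

lemma consC_blocks {k b : ℕ} (hb : 1 ≤ b) (hbk : b ≤ k) (c : Composition (k - b)) :
    (consC ⟨b, c⟩).blocks = b :: c.blocks := by
  simp [consC, hb, hbk]

lemma sum_composition_split {M : Type*} [AddCommMonoid M] {k : ℕ} (hk : 1 ≤ k)
    (f : Composition k → M) :
    ∑ c : Composition k, f c
      = ∑ b ∈ Icc 1 k, ∑ c : Composition (k - b), f (consC ⟨b, c⟩) := by
  rw [← Finset.sum_sigma (Icc 1 k) (fun b => (univ : Finset (Composition (k - b))))
      (fun p => f (consC p))]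
  refine (Finset.sum_bij (fun p _ => consC p) (fun _ _ => mem_univ _) ?_ ?_ ?_).symm
  · rintro ⟨b, c⟩ hp ⟨b', c'⟩ hp' heq
    rw [Finset.mem_sigma, mem_Icc] at hp hp'
    have hbl := consC_blocks hp.1.1 hp.1.2 c
    have hbl' := consC_blocks hp'.1.1 hp'.1.2 c'
    rw [Composition.ext_iff, hbl, hbl'] at heq
    obtain ⟨hb, hc⟩ := List.cons.injEq _ _ _ _ ▸ heq
    subst hb
    exact congrArg (Sigma.mk b) (Composition.ext hc)
  · intro c _
    have hpos := comp_headI_pos hk c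
    have hle := comp_tail_sum c
    refine ⟨⟨c.blocks.headI,
      ⟨c.blocks.tail, fun {i} hi => c.blocks_pos (List.mem_of_mem_tail hi), by omega⟩⟩,
      ?_, ?_⟩
    · rw [Finset.mem_sigma, mem_Icc]
      exact ⟨⟨hpos, show c.blocks.headI ≤ k by omega⟩, mem_univ _⟩
    · apply Composition.ext
      rw [consC_blocks hpos (by omega)]
      show c.blocks.headI :: c.blocks.tail = c.blocks
      cases hb : c.blocks with
      | nil => exfalso; have := comp_headI_pos hk c; rw [hb] at this; simp at this
      | cons a t => simp
  · intro p _; rfl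

variable (q : R) (h : ℕ → R)

/-- Signed generating sum over compositions. -/
def Gaux (m : ℕ) : R :=
  ∑ c : Composition m, (-1 : R) ^ c.blocks.length * (c.blocks.map h).prod

/-- Signed, `q`-weighted generating sum over compositions. -/
def Faux (k : ℕ) : R :=
  ∑ c : Composition k,
    (-1 : R) ^ (c.blocks.length + 1) * (qInt q c.blocks.headI * (c.blocks.map h).prod)

lemma Gaux_zero : Gaux h 0 = 1 := by
  have hu : ∀ c : Composition 0, c.blocks = [] := by
    intro c
    have hs := c.blocks_sum
    cases hb : c.blocks with
    | nil => rfl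
    | cons a t =>
        rw [hb, List.sum_cons] at hs
        have := c.blocks_pos (by rw [hb]; exact List.mem_cons_self)
        omega
  haveI hss : Subsingleton (Composition 0) :=
    ⟨fun a b => Composition.ext ((hu a).trans (hu b).symm)⟩
  have hcard : Fintype.card (Composition 0) = 1 := by
    have h1 : 0 < Fintype.card (Composition 0) :=
      Fintype.card_pos_iff.mpr ⟨Composition.ones 0⟩
    have h2 := Fintype.card_le_one_iff_subsingleton.mpr hss
    omega
  have hone : ∀ c : Composition 0,
      (-1 : R) ^ c.blocks.length * (c.blocks.map h).prod = 1 := by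
    intro c; rw [hu c]; simp
  rw [Gaux, Finset.sum_congr rfl (fun c _ => hone c), Finset.sum_const, Finset.card_univ, hcard]
  simp

lemma Gaux_rec {k : ℕ} (hk : 1 ≤ k) :
    Gaux h k = ∑ b ∈ Icc 1 k, -(h b * Gaux h (k - b)) := by
  rw [Gaux, sum_composition_split hk]
  refine Finset.sum_congr rfl fun b hb => ?_
  rw [mem_Icc] at hb
  rw [Gaux, Finset.mul_sum, ← Finset.sum_neg_distrib]
  refine Finset.sum_congr rfl fun c _ => ?_
  rw [consC_blocks hb.1 hb.2]
  simp [pow_succ]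
  ring

lemma Faux_expand {k : ℕ} (hk : 1 ≤ k) :
    Faux q h k = ∑ b ∈ Icc 1 k, (qInt q b * h b) * Gaux h (k - b) := by
  rw [Faux, sum_composition_split hk]
  refine Finset.sum_congr rfl fun b hb => ?_
  rw [mem_Icc] at hb
  rw [Gaux, Finset.mul_sum]
  refine Finset.sum_congr rfl fun c _ => ?_
  rw [consC_blocks hb.1 hb.2]
  simp [pow_succ]
  ring

/-- The convolution `∑ h m * Gaux (t - m)`. -/
def Saux (t : ℕ) : R := ∑ m ∈ range (t + 1), h m * Gaux h (t - m)

lemma Saux_zero (h0 : h 0 = 1) : Saux h 0 = 1 := by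
  rw [Saux]
  simp [h0, Gaux_zero]

lemma Saux_pos (h0 : h 0 = 1) {t : ℕ} (ht : 1 ≤ t) : Saux h t = 0 := by
  have hG' : Gaux h t = -∑ m ∈ range t, h (m + 1) * Gaux h (t - (m + 1)) := by
    rw [Gaux_rec h ht, show Icc 1 t = Ico 1 (t + 1) from (Finset.Ico_add_one_right_eq_Icc 1 t).symm,
      Finset.sum_Ico_eq_sum_range, Finset.sum_neg_distrib]
    congr 1
    refine Finset.sum_congr (by congr 1) fun m _ => by rw [Nat.add_comm 1 m]
  rw [Saux, Finset.sum_range_succ']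
  simp only [h0, Nat.sub_zero, one_mul]
  rw [hG']
  ring
  

lemma Faux_eq_rho (ρ : ℕ → R) (h0 : h 0 = 1)
    (hrec : ∀ k : ℕ, 1 ≤ k → qInt q k * h k = ∑ j ∈ Finset.Icc 1 k, h (k - j) * ρ j)
    {k : ℕ} (hk : 1 ≤ k) : Faux q h k = ρ k := by
  rw [Faux_expand q h hk]
  have step1 : ∀ b ∈ Icc 1 k,
      (qInt q b * h b) * Gaux h (k - b)
        = ∑ j ∈ Icc 1 b, (h (b - j) * ρ j) * Gaux h (k - b) := by
    intro b hb
    rw [mem_Icc] at hb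
    rw [hrec b hb.1, Finset.sum_mul]
  rw [Finset.sum_congr rfl step1]
  rw [Finset.sum_comm' (s := Icc 1 k) (t := fun b => Icc 1 b) (t' := Icc 1 k)
    (s' := fun j => Icc j k) (fun b j => by simp only [mem_Icc]; omega)]
  have step2 : ∀ j ∈ Icc 1 k,
      (∑ b ∈ Icc j k, (h (b - j) * ρ j) * Gaux h (k - b)) = ρ j * Saux h (k - j) := by
    intro j hj
    rw [mem_Icc] at hj
    rw [Saux, Finset.mul_sum]
    rw [show Icc j k = Ico j (k + 1) from (Finset.Ico_add_one_right_eq_Icc j k).symm]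
    rw [Finset.sum_Ico_eq_sum_range]
    rw [show k + 1 - j = k - j + 1 by omega]
    refine Finset.sum_congr rfl fun m _ => ?_
    rw [show j + m - j = m by omega, show k - (j + m) = k - j - m by omega]
    ring
  rw [Finset.sum_congr rfl step2]
  rw [Finset.sum_eq_single k
    (fun j hj hne => by
      rw [mem_Icc] at hj
      rw [Saux_pos h h0 (by omega)]
      ring)
    (fun hk' => absurd (mem_Icc.mpr ⟨hk, le_refl k⟩) hk')]
  rw [Nat.sub_self, Saux_zero h h0, mul_one]

lemma multiset_card_finsum {ι : Type*} (s : Finset ι) (f : ι → Multiset ℕ) :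
    Multiset.card (∑ i ∈ s, f i) = ∑ i ∈ s, Multiset.card (f i) := by
  induction s using Finset.cons_induction with
  | empty => simp
  | cons a s has ih => rw [Finset.sum_cons, Finset.sum_cons, Multiset.card_add, ih]

lemma multiset_map_finsum {ι α β : Type*} (s : Finset ι) (f : ι → Multiset α) (g : α → β) :
    (∑ i ∈ s, f i).map g = ∑ i ∈ s, (f i).map g := by
  induction s using Finset.cons_induction with
  | empty => simp
  | cons a s has ih => rw [Finset.sum_cons, Finset.sum_cons, Multiset.map_add, ih]

end Aux

/-- If `h 0 = 1` and `[k]_q h(k) = Σ_{j=1}^k h(k-j) ρ(j)` for all `k ≥ 1`,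
then for any partition `λ` of `n` (whose parts are listed, in some order, by the list `l`),
`ρ_λ = Σ_{μ ⊢ n} (-1)^{ℓ(λ)-ℓ(μ)} w_{λμ} h_μ`, where `w_{λμ}` is the sum of the `q`-weights
of all domino tabloids of shape `λ` and type `μ`.  A domino tabloid is encoded as a choice,
for each row `i` of the diagram (a part `l.get i` of `λ`), of a composition of that part,
such that the multiset of all blocks of all the chosen compositions is `μ`; its `q`-weight
is the product over rows of `[b]_q` where `b` is the first (leftmost) block of the row.
The sign `(-1)^{ℓ(λ)-ℓ(μ)}` is written as `(-1)^{ℓ(λ)+ℓ(μ)}`, which is equal to it in any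
commutative ring. -/
theorem rho_lambda_eq_sum_domino_tabloids (R : Type*) [CommRing R] (q : R) (h ρ : ℕ → R)
    (h0 : h 0 = 1)
    (hrec : ∀ k : ℕ, 1 ≤ k → qInt q k * h k = ∑ j ∈ Finset.Icc 1 k, h (k - j) * ρ j)
    (n : ℕ) (hn : 1 ≤ n) (lam : Nat.Partition n) (l : List ℕ)
    (hl : (l : Multiset ℕ) = lam.parts) :
    (lam.parts.map ρ).prod =
      ∑ μ : Nat.Partition n,
        (-1 : R) ^ (Multiset.card lam.parts + Multiset.card μ.parts) *
          (∑ T ∈ (Finset.univ :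
                Finset (∀ i : Fin l.length, Composition (l.get i))).filter
              (fun T => (∑ i : Fin l.length, ((T i).blocks : Multiset ℕ)) = μ.parts),
            ∏ i : Fin l.length, qInt q ((T i).blocks.headI)) *
          (μ.parts.map h).prod := by
  classical
  have hpos : ∀ i : Fin l.length, 1 ≤ l.get i := by
    intro i
    have hmem : l.get i ∈ (l : Multiset ℕ) := by
      rw [Multiset.mem_coe]
      simpa using List.get_mem l i.1 i.2
    rw [hl] at hmem
    exact lam.parts_pos hmem
  have hcardlam : Multiset.card lam.parts = l.length := by
    rw [← hl, Multiset.coe_card]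
  set key : (∀ i : Fin l.length, Composition (l.get i)) → Multiset ℕ :=
    fun T => ∑ i : Fin l.length, ((T i).blocks : Multiset ℕ) with hkey
  have hkeysum : ∀ T, (key T).sum = n := by
    intro T
    rw [hkey]
    rw [Multiset.sum_sum]
    have h1 : ∀ i : Fin l.length, (((T i).blocks : Multiset ℕ)).sum = l.get i := by
      intro i; rw [Multiset.sum_coe]; exact (T i).blocks_sum
    rw [Finset.sum_congr rfl fun i _ => h1 i]
    have h2 : ∑ i : Fin l.length, l.get i = l.sum := by
      simpa using Fin.sum_univ_get l
    rw [h2, ← Multiset.sum_coe, hl, lam.parts_sum]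
  have hkeypos : ∀ T, ∀ {x : ℕ}, x ∈ key T → 0 < x := by
    intro T x hx
    rw [hkey] at hx
    rw [Multiset.mem_sum] at hx
    obtain ⟨i, -, hi⟩ := hx
    exact (T i).blocks_pos (Multiset.mem_coe.mp hi)
  set pmap : (∀ i : Fin l.length, Composition (l.get i)) → Nat.Partition n :=
    fun T => ⟨key T, hkeypos T, hkeysum T⟩ with hpmap
  have step1 : ∑ μ : Nat.Partition n,
        (-1 : R) ^ (Multiset.card lam.parts + Multiset.card μ.parts) *
          (∑ T ∈ (Finset.univ :
                Finset (∀ i : Fin l.length, Composition (l.get i))).filter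
              (fun T => (∑ i : Fin l.length, ((T i).blocks : Multiset ℕ)) = μ.parts),
            ∏ i : Fin l.length, qInt q ((T i).blocks.headI)) *
          (μ.parts.map h).prod
      = ∑ T : ∀ i : Fin l.length, Composition (l.get i),
          (-1 : R) ^ (l.length + Multiset.card (key T)) *
            (∏ i : Fin l.length, qInt q ((T i).blocks.headI)) *
            ((key T).map h).prod := by
    rw [← Finset.sum_fiberwise (univ : Finset (∀ i : Fin l.length, Composition (l.get i)))
      pmap (fun T => (-1 : R) ^ (l.length + Multiset.card (key T)) *
            (∏ i : Fin l.length, qInt q ((T i).blocks.headI)) *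
            ((key T).map h).prod)]
    refine Finset.sum_congr rfl fun μ _ => ?_
    rw [Finset.mul_sum, Finset.sum_mul]
    have hfilter : (Finset.univ :
          Finset (∀ i : Fin l.length, Composition (l.get i))).filter
            (fun T => (∑ i : Fin l.length, ((T i).blocks : Multiset ℕ)) = μ.parts)
        = (Finset.univ :
          Finset (∀ i : Fin l.length, Composition (l.get i))).filter
            (fun T => pmap T = μ) := by
      refine Finset.filter_congr fun T _ => ?_
      constructor
      · intro hT
        exact Nat.Partition.ext hT
      · intro hT
        have : (pmap T).parts = μ.parts := by rw [hT]
        exact this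
    rw [hfilter]
    refine Finset.sum_congr rfl fun T hT => ?_
    have hμT : μ.parts = key T := by
      rw [Finset.mem_filter] at hT
      rw [← hT.2]
    rw [hμT, hcardlam]
  rw [step1]
  have step2 : ∀ T : ∀ i : Fin l.length, Composition (l.get i),
      (-1 : R) ^ (l.length + Multiset.card (key T)) *
        (∏ i : Fin l.length, qInt q ((T i).blocks.headI)) *
        ((key T).map h).prod
      = ∏ i : Fin l.length,
          (-1 : R) ^ ((T i).blocks.length + 1) *
            (qInt q ((T i).blocks.headI) * (((T i).blocks.map h)).prod) := by
    intro T
    have hcard : Multiset.card (key T) = ∑ i : Fin l.length, (T i).blocks.length := by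
      rw [hkey, multiset_card_finsum]
      simp
    have hsign : (-1 : R) ^ (l.length + Multiset.card (key T))
        = ∏ i : Fin l.length, (-1 : R) ^ ((T i).blocks.length + 1) := by
      rw [Finset.prod_pow_eq_pow_sum]
      congr 1
      rw [hcard, Finset.sum_add_distrib]
      simp [add_comm]
    have hprod : ((key T).map h).prod
        = ∏ i : Fin l.length, (((T i).blocks.map h)).prod := by
      rw [hkey, multiset_map_finsum, Multiset.prod_sum]
      refine Finset.prod_congr rfl fun i _ => ?_
      rw [Multiset.map_coe, Multiset.prod_coe]
    rw [hsign, hprod, ← Finset.prod_mul_distrib, ← Finset.prod_mul_distrib]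
    exact Finset.prod_congr rfl fun i _ => by ring
  rw [Finset.sum_congr rfl fun T _ => step2 T]
  have step3 : ∑ T : ∀ i : Fin l.length, Composition (l.get i),
        ∏ i : Fin l.length,
          (-1 : R) ^ ((T i).blocks.length + 1) *
            (qInt q ((T i).blocks.headI) * (((T i).blocks.map h)).prod)
      = ∏ i : Fin l.length, Faux q h (l.get i) := by
    simp only [Faux]
    rw [Finset.prod_univ_sum (fun i => (univ : Finset (Composition (l.get i))))]
    rw [Fintype.piFinset_univ]
  rw [step3]
  rw [← hl, Multiset.map_coe, Multiset.prod_coe]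
  rw [← Fin.prod_univ_fun_getElem l ρ]
  refine Finset.prod_congr rfl fun i _ => ?_
  rw [Faux_eq_rho q h ρ h0 hrec (hpos i)]
  rfl
end

section
/- Let R be a commutative ring, q ∈ R, and y_1, y_2, … ∈ R. Let m_1 be a Hessenberg function on {1,…,n_1} and m_2 a Hessenberg function on {1,…,n_2}, and define the Hessenberg function m on {1,…,n_1+n_2} by m(i) = m_1(i) for i ≤ n_1 and m(i) = n_1 + m_2(i − n_1) for i > n_1. Then X(m) = X(m_1) · X(m_2) in R. -/
open Finset

section Glue

variable {n₁ n₂ : ℕ}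

/-- Glue two parent functions into one on `Fin (n₁ + n₂)`. -/
def glue (g₁ : Fin n₁ → Option (Fin n₁)) (g₂ : Fin n₂ → Option (Fin n₂))
    (j : Fin (n₁ + n₂)) : Option (Fin (n₁ + n₂)) :=
  if hj : (j : ℕ) < n₁ then (g₁ ⟨j, hj⟩).map (Fin.castAdd n₂)
  else (g₂ ⟨(j : ℕ) - n₁, by omega⟩).map (Fin.natAdd n₁)

lemma glue_castAdd (g₁ : Fin n₁ → Option (Fin n₁)) (g₂ : Fin n₂ → Option (Fin n₂))
    (i : Fin n₁) : glue g₁ g₂ (Fin.castAdd n₂ i) = (g₁ i).map (Fin.castAdd n₂) := by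
  have hi : ((Fin.castAdd n₂ i : Fin (n₁ + n₂)) : ℕ) < n₁ := i.isLt
  simp only [glue, dif_pos hi]
  rfl

lemma glue_natAdd (g₁ : Fin n₁ → Option (Fin n₁)) (g₂ : Fin n₂ → Option (Fin n₂))
    (i : Fin n₂) : glue g₁ g₂ (Fin.natAdd n₁ i) = (g₂ i).map (Fin.natAdd n₁) := by
  have hi : ¬ ((Fin.natAdd n₁ i : Fin (n₁ + n₂)) : ℕ) < n₁ := by
    simp [Fin.natAdd]
  simp only [glue, dif_neg hi]
  have he : (⟨((Fin.natAdd n₁ i : Fin (n₁ + n₂)) : ℕ) - n₁, by omega⟩ : Fin n₂) = i := by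
    apply Fin.ext
    simp [Fin.coe_natAdd]
  rw [he]

variable {h₁ : Hessenberg n₁} {h₂ : Hessenberg n₂} {h : Hessenberg (n₁ + n₂)}

/-- Glue two increasing spanning forests. -/
def glueISF
    (hl : ∀ i : Fin n₁, (h.m (Fin.castAdd n₂ i) : ℕ) = (h₁.m i : ℕ))
    (hr : ∀ i : Fin n₂, (h.m (Fin.natAdd n₁ i) : ℕ) = n₁ + (h₂.m i : ℕ))
    (F₁ : ISF h₁) (F₂ : ISF h₂) : ISF h := by
  refine ⟨glue F₁.1 F₂.1, ?_⟩
  intro j u hu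
  by_cases hj : (j : ℕ) < n₁
  · have hje : j = Fin.castAdd n₂ ⟨(j : ℕ), hj⟩ := Fin.ext rfl
    rw [hje, glue_castAdd] at hu
    obtain ⟨v, hv, rfl⟩ := Option.map_eq_some_iff.1 hu
    obtain ⟨h1, h2⟩ := F₁.2 _ _ hv
    constructor
    · rw [Fin.lt_def]; exact h1
    · rw [Fin.le_def]; rw [hl v]; exact h2
  · have hj2 : (j : ℕ) - n₁ < n₂ := by omega
    have hje : j = Fin.natAdd n₁ ⟨(j : ℕ) - n₁, hj2⟩ := by
      apply Fin.ext; simp [Fin.coe_natAdd]; omega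
    rw [hje, glue_natAdd] at hu
    obtain ⟨v, hv, rfl⟩ := Option.map_eq_some_iff.1 hu
    obtain ⟨h1, h2⟩ := F₂.2 _ _ hv
    rw [Fin.lt_def] at h1
    rw [Fin.le_def] at h2
    have h1' : (v : ℕ) < (j : ℕ) - n₁ := h1
    have h2' : (j : ℕ) - n₁ ≤ (h₂.m v : ℕ) := h2
    constructor
    · rw [hje, Fin.lt_def]; simp only [Fin.coe_natAdd]; omega
    · rw [hje, Fin.le_def, hr v]; simp only [Fin.coe_natAdd]; omega

lemma rootOf_none {n : ℕ} {g : Fin n → Option (Fin n)} {hg : ∀ j u, g j = some u → u < j}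
    {j : Fin n} (hj : g j = none) : rootOf g hg j = j := by
  rw [rootOf]; split <;> simp_all

lemma rootOf_some {n : ℕ} {g : Fin n → Option (Fin n)} {hg : ∀ j u, g j = some u → u < j}
    {j u : Fin n} (hj : g j = some u) : rootOf g hg j = rootOf g hg u := by
  rw [rootOf]; split <;> simp_all

lemma rootOf_glue_cast {g₁ : Fin n₁ → Option (Fin n₁)} {g₂ : Fin n₂ → Option (Fin n₂)}
    (hg₁ : ∀ j u, g₁ j = some u → u < j)
    (hg : ∀ j u, glue g₁ g₂ j = some u → u < j) (i : Fin n₁) :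
    rootOf (glue g₁ g₂) hg (Fin.castAdd n₂ i) = Fin.castAdd n₂ (rootOf g₁ hg₁ i) := by
  suffices H : ∀ k, ∀ i : Fin n₁, (i : ℕ) = k →
      rootOf (glue g₁ g₂) hg (Fin.castAdd n₂ i) = Fin.castAdd n₂ (rootOf g₁ hg₁ i) from
    H i i rfl
  intro k
  induction k using Nat.strong_induction_on with
  | _ k IH =>
    intro i hik
    cases hgi : g₁ i with
    | none =>
      rw [rootOf_none (by rw [glue_castAdd, hgi]; rfl), rootOf_none hgi]
    | some u =>
      rw [rootOf_some (show glue g₁ g₂ (Fin.castAdd n₂ i) = some (Fin.castAdd n₂ u) by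
            rw [glue_castAdd, hgi]; rfl),
          rootOf_some hgi]
      exact IH u (by have := hg₁ i u hgi; rw [Fin.lt_def] at this; omega) u rfl

lemma rootOf_glue_nat {g₁ : Fin n₁ → Option (Fin n₁)} {g₂ : Fin n₂ → Option (Fin n₂)}
    (hg₂ : ∀ j u, g₂ j = some u → u < j)
    (hg : ∀ j u, glue g₁ g₂ j = some u → u < j) (i : Fin n₂) :
    rootOf (glue g₁ g₂) hg (Fin.natAdd n₁ i) = Fin.natAdd n₁ (rootOf g₂ hg₂ i) := by
  suffices H : ∀ k, ∀ i : Fin n₂, (i : ℕ) = k →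
      rootOf (glue g₁ g₂) hg (Fin.natAdd n₁ i) = Fin.natAdd n₁ (rootOf g₂ hg₂ i) from
    H i i rfl
  intro k
  induction k using Nat.strong_induction_on with
  | _ k IH =>
    intro i hik
    cases hgi : g₂ i with
    | none =>
      rw [rootOf_none (by rw [glue_natAdd, hgi]; rfl), rootOf_none hgi]
    | some u =>
      rw [rootOf_some (show glue g₁ g₂ (Fin.natAdd n₁ i) = some (Fin.natAdd n₁ u) by
            rw [glue_natAdd, hgi]; rfl),
          rootOf_some hgi]
      exact IH u (by have := hg₂ i u hgi; rw [Fin.lt_def] at this; omega) u rfl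

end Glue
section Split

variable {n₁ n₂ : ℕ} {h₁ : Hessenberg n₁} {h₂ : Hessenberg n₂} {h : Hessenberg (n₁ + n₂)}

/-- Any edge of the glued graph starting in the first block stays in the first block. -/
lemma block_first (F : ISF h) (i : Fin n₁) (v : Fin (n₁ + n₂))
    (hv : F.1 (Fin.castAdd n₂ i) = some v) : (v : ℕ) < n₁ := by
  have := (F.2 _ _ hv).1
  rw [Fin.lt_def] at this
  have hi : ((Fin.castAdd n₂ i : Fin (n₁ + n₂)) : ℕ) = (i : ℕ) := rfl
  omega

/-- Any edge of the glued graph ending in the second block starts there too. -/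
lemma block_second
    (hl : ∀ i : Fin n₁, (h.m (Fin.castAdd n₂ i) : ℕ) = (h₁.m i : ℕ))
    (F : ISF h) (i : Fin n₂) (v : Fin (n₁ + n₂))
    (hv : F.1 (Fin.natAdd n₁ i) = some v) : n₁ ≤ (v : ℕ) := by
  by_contra hcon
  push_neg at hcon
  have hle := (F.2 _ _ hv).2
  rw [Fin.le_def] at hle
  have hve : v = Fin.castAdd n₂ ⟨(v : ℕ), hcon⟩ := Fin.ext rfl
  rw [hve, hl] at hle
  have h1 : ((Fin.natAdd n₁ i : Fin (n₁ + n₂)) : ℕ) = n₁ + (i : ℕ) := rfl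
  have h2 : ((h₁.m ⟨(v : ℕ), hcon⟩ : Fin n₁) : ℕ) < n₁ := (h₁.m _).isLt
  omega

/-- First component of the splitting of a forest on the glued graph. -/
def splitF₁
    (hl : ∀ i : Fin n₁, (h.m (Fin.castAdd n₂ i) : ℕ) = (h₁.m i : ℕ))
    (F : ISF h) : ISF h₁ := by
  refine ⟨fun i => (F.1 (Fin.castAdd n₂ i)).bind
    (fun u => if hu : (u : ℕ) < n₁ then some ⟨u, hu⟩ else none), ?_⟩
  intro j u hu
  obtain ⟨v, hv, hvu⟩ := Option.bind_eq_some_iff.1 hu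
  have hvn : (v : ℕ) < n₁ := block_first F j v hv
  rw [dif_pos hvn] at hvu
  obtain rfl := Option.some_injective _ hvu
  obtain ⟨hv1, hv2⟩ := F.2 _ _ hv
  rw [Fin.lt_def] at hv1
  rw [Fin.le_def] at hv2
  have hve : v = Fin.castAdd n₂ ⟨(v : ℕ), hvn⟩ := Fin.ext rfl
  rw [hve, hl] at hv2
  exact ⟨by rw [Fin.lt_def]; exact hv1, by rw [Fin.le_def]; exact hv2⟩

/-- Second component of the splitting of a forest on the glued graph. -/
def splitF₂
    (hr : ∀ i : Fin n₂, (h.m (Fin.natAdd n₁ i) : ℕ) = n₁ + (h₂.m i : ℕ))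
    (F : ISF h) : ISF h₂ := by
  refine ⟨fun i => (F.1 (Fin.natAdd n₁ i)).bind
    (fun u => if hu : n₁ ≤ (u : ℕ) then some ⟨(u : ℕ) - n₁, by omega⟩ else none), ?_⟩
  intro j u hu
  obtain ⟨v, hv, hvu⟩ := Option.bind_eq_some_iff.1 hu
  by_cases hvn : n₁ ≤ (v : ℕ)
  · have hval : (u : ℕ) = (v : ℕ) - n₁ := by
      rw [dif_pos hvn] at hvu
      exact (congrArg Fin.val (Option.some_injective _ hvu)).symm
    obtain ⟨hv1, hv2⟩ := F.2 _ _ hv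
    rw [Fin.lt_def] at hv1
    rw [Fin.le_def] at hv2
    have hve : v = Fin.natAdd n₁ u := by
      apply Fin.ext
      show (v : ℕ) = n₁ + (u : ℕ)
      omega
    rw [hve, hr] at hv2
    have hv1' : (v : ℕ) < n₁ + (j : ℕ) := hv1
    have hv2' : n₁ + (j : ℕ) ≤ n₁ + (h₂.m u : ℕ) := hv2
    constructor
    · rw [Fin.lt_def]; omega
    · rw [Fin.le_def]; omega
  · rw [dif_neg hvn] at hvu
    exact absurd hvu (by simp)

/-- Splitting then gluing gives back the original forest. -/
lemma glue_split
    (hl : ∀ i : Fin n₁, (h.m (Fin.castAdd n₂ i) : ℕ) = (h₁.m i : ℕ))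
    (hr : ∀ i : Fin n₂, (h.m (Fin.natAdd n₁ i) : ℕ) = n₁ + (h₂.m i : ℕ))
    (F : ISF h) : glueISF hl hr (splitF₁ hl F) (splitF₂ hr F) = F := by
  apply Subtype.ext
  funext j
  show glue (splitF₁ hl F).1 (splitF₂ hr F).1 j = F.1 j
  by_cases hj : (j : ℕ) < n₁
  · have hje : j = Fin.castAdd n₂ ⟨(j : ℕ), hj⟩ := Fin.ext rfl
    rw [hje, glue_castAdd]
    show ((F.1 (Fin.castAdd n₂ ⟨(j : ℕ), hj⟩)).bind _).map _ = _
    cases hv : F.1 (Fin.castAdd n₂ ⟨(j : ℕ), hj⟩) with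
    | none => simp
    | some v =>
      have hvn : (v : ℕ) < n₁ := block_first F _ v hv
      rw [Option.bind_some, dif_pos hvn, Option.map_some]
      exact congrArg some (Fin.ext rfl)
  · have hj2 : (j : ℕ) - n₁ < n₂ := by omega
    have hje : j = Fin.natAdd n₁ ⟨(j : ℕ) - n₁, hj2⟩ := by
      apply Fin.ext; simp [Fin.coe_natAdd]; omega
    rw [hje, glue_natAdd]
    show ((F.1 (Fin.natAdd n₁ ⟨(j : ℕ) - n₁, hj2⟩)).bind _).map _ = _
    cases hv : F.1 (Fin.natAdd n₁ ⟨(j : ℕ) - n₁, hj2⟩) with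
    | none => simp
    | some v =>
      have hvn : n₁ ≤ (v : ℕ) := block_second hl F _ v hv
      rw [Option.bind_some, dif_pos hvn, Option.map_some]
      refine congrArg some (Fin.ext ?_)
      show n₁ + ((v : ℕ) - n₁) = (v : ℕ)
      omega

/-- Gluing then splitting gives back the pair. -/
lemma split_glue₁
    (hl : ∀ i : Fin n₁, (h.m (Fin.castAdd n₂ i) : ℕ) = (h₁.m i : ℕ))
    (hr : ∀ i : Fin n₂, (h.m (Fin.natAdd n₁ i) : ℕ) = n₁ + (h₂.m i : ℕ))
    (F₁ : ISF h₁) (F₂ : ISF h₂) : splitF₁ hl (glueISF hl hr F₁ F₂) = F₁ := by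
  apply Subtype.ext
  funext i
  show ((glue F₁.1 F₂.1) (Fin.castAdd n₂ i)).bind _ = F₁.1 i
  rw [glue_castAdd]
  cases hv : F₁.1 i with
  | none => simp
  | some v =>
    rw [Option.map_some, Option.bind_some,
      dif_pos (show ((Fin.castAdd n₂ v : Fin (n₁ + n₂)) : ℕ) < n₁ from v.isLt)]
    exact congrArg some (Fin.ext rfl)

lemma split_glue₂
    (hl : ∀ i : Fin n₁, (h.m (Fin.castAdd n₂ i) : ℕ) = (h₁.m i : ℕ))
    (hr : ∀ i : Fin n₂, (h.m (Fin.natAdd n₁ i) : ℕ) = n₁ + (h₂.m i : ℕ))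
    (F₁ : ISF h₁) (F₂ : ISF h₂) : splitF₂ hr (glueISF hl hr F₁ F₂) = F₂ := by
  apply Subtype.ext
  funext i
  show ((glue F₁.1 F₂.1) (Fin.natAdd n₁ i)).bind _ = F₂.1 i
  rw [glue_natAdd]
  cases hv : F₂.1 i with
  | none => simp
  | some v =>
    have hle : n₁ ≤ ((Fin.natAdd n₁ v : Fin (n₁ + n₂)) : ℕ) := by
      simp [Fin.coe_natAdd]
    rw [Option.map_some, Option.bind_some, dif_pos hle]
    refine congrArg some (Fin.ext ?_)
    show ((Fin.natAdd n₁ v : Fin (n₁ + n₂)) : ℕ) - n₁ = (v : ℕ)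
    simp [Fin.coe_natAdd]

end Split
set_option maxRecDepth 8000
section Transfer

variable {n₁ n₂ : ℕ} {h₁ : Hessenberg n₁} {h₂ : Hessenberg n₂} {h : Hessenberg (n₁ + n₂)}

lemma castAdd_lt_iff {a b : Fin n₁} :
    (Fin.castAdd n₂ a : Fin (n₁ + n₂)) < Fin.castAdd n₂ b ↔ a < b := Iff.rfl

lemma natAdd_lt_iff {a b : Fin n₂} :
    (Fin.natAdd n₁ a : Fin (n₁ + n₂)) < Fin.natAdd n₁ b ↔ a < b := by
  constructor
  · intro hc
    have hc' : n₁ + (a : ℕ) < n₁ + (b : ℕ) := hc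
    exact (Fin.lt_def).2 (by omega)
  · intro hc
    have hc' : (a : ℕ) < (b : ℕ) := hc
    show n₁ + (a : ℕ) < n₁ + (b : ℕ)
    omega

lemma natAdd_lt_castAdd_iff {a : Fin n₂} {b : Fin n₁} :
    (Fin.natAdd n₁ a : Fin (n₁ + n₂)) < Fin.castAdd n₂ b ↔ False := by
  constructor
  · intro hc
    have hc' : n₁ + (a : ℕ) < (b : ℕ) := hc
    have := b.isLt
    omega
  · exact False.elim

lemma castAdd_inj_iff {a b : Fin n₁} :
    (Fin.castAdd n₂ a : Fin (n₁ + n₂)) = Fin.castAdd n₂ b ↔ a = b := by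
  constructor
  · intro hc
    have hc0 := congrArg Fin.val hc
    have hc' : (a : ℕ) = (b : ℕ) := hc0
    exact Fin.ext hc'
  · rintro rfl; rfl

lemma natAdd_inj_iff {a b : Fin n₂} :
    (Fin.natAdd n₁ a : Fin (n₁ + n₂)) = Fin.natAdd n₁ b ↔ a = b := by
  constructor
  · intro hc
    have hc0 := congrArg Fin.val hc
    have hc' : n₁ + (a : ℕ) = n₁ + (b : ℕ) := hc0
    exact Fin.ext (by omega)
  · rintro rfl; rfl

lemma natAdd_eq_castAdd_iff {a : Fin n₂} {b : Fin n₁} :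
    (Fin.natAdd n₁ a : Fin (n₁ + n₂)) = Fin.castAdd n₂ b ↔ False := by
  constructor
  · intro hc
    have hc0 := congrArg Fin.val hc
    have hc' : n₁ + (a : ℕ) = (b : ℕ) := hc0
    have := b.isLt
    omega
  · exact False.elim

lemma castAdd_eq_natAdd_iff {a : Fin n₁} {b : Fin n₂} :
    (Fin.castAdd n₂ a : Fin (n₁ + n₂)) = Fin.natAdd n₁ b ↔ False := by
  constructor
  · intro hc
    have hc0 := congrArg Fin.val hc
    have hc' : (a : ℕ) = n₁ + (b : ℕ) := hc0
    have := a.isLt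
    omega
  · exact False.elim

lemma le_m_cast_iff (hl : ∀ i : Fin n₁, (h.m (Fin.castAdd n₂ i) : ℕ) = (h₁.m i : ℕ))
    (a b : Fin n₁) :
    (Fin.castAdd n₂ b : Fin (n₁ + n₂)) ≤ h.m (Fin.castAdd n₂ a) ↔ b ≤ h₁.m a := by
  rw [Fin.le_def, Fin.le_def, hl a]
  exact Iff.rfl

lemma natAdd_le_m_cast_iff (hl : ∀ i : Fin n₁, (h.m (Fin.castAdd n₂ i) : ℕ) = (h₁.m i : ℕ))
    (a : Fin n₁) (b : Fin n₂) :
    (Fin.natAdd n₁ b : Fin (n₁ + n₂)) ≤ h.m (Fin.castAdd n₂ a) ↔ False := by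
  constructor
  · intro hc
    rw [Fin.le_def, hl a] at hc
    have hc' : n₁ + (b : ℕ) ≤ (h₁.m a : ℕ) := hc
    have := (h₁.m a).isLt
    omega
  · exact False.elim

lemma le_m_nat_iff (hr : ∀ i : Fin n₂, (h.m (Fin.natAdd n₁ i) : ℕ) = n₁ + (h₂.m i : ℕ))
    (a b : Fin n₂) :
    (Fin.natAdd n₁ b : Fin (n₁ + n₂)) ≤ h.m (Fin.natAdd n₁ a) ↔ b ≤ h₂.m a := by
  rw [Fin.le_def, Fin.le_def, hr a]
  constructor
  · intro hc
    have hc' : n₁ + (b : ℕ) ≤ n₁ + (h₂.m a : ℕ) := hc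
    omega
  · intro hc
    show n₁ + (b : ℕ) ≤ n₁ + (h₂.m a : ℕ)
    omega

variable (hl : ∀ i : Fin n₁, (h.m (Fin.castAdd n₂ i) : ℕ) = (h₁.m i : ℕ))
variable (hr : ∀ i : Fin n₂, (h.m (Fin.natAdd n₁ i) : ℕ) = n₁ + (h₂.m i : ℕ))

lemma root_glue_cast (F₁ : ISF h₁) (F₂ : ISF h₂) (i : Fin n₁) :
    (glueISF hl hr F₁ F₂).root (Fin.castAdd n₂ i) = Fin.castAdd n₂ (F₁.root i) := by
  unfold ISF.root
  exact rootOf_glue_cast (fun j u hj => (F₁.2 j u hj).1) _ i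

lemma root_glue_nat (F₁ : ISF h₁) (F₂ : ISF h₂) (i : Fin n₂) :
    (glueISF hl hr F₁ F₂).root (Fin.natAdd n₁ i) = Fin.natAdd n₁ (F₂.root i) := by
  unfold ISF.root
  exact rootOf_glue_nat (fun j u hj => (F₂.2 j u hj).1) _ i

lemma compSize_glue_cast (F₁ : ISF h₁) (F₂ : ISF h₂) (r : Fin n₁) :
    (glueISF hl hr F₁ F₂).compSize (Fin.castAdd n₂ r) = F₁.compSize r := by
  unfold ISF.compSize
  rw [Finset.card_filter, Finset.card_filter, Fin.sum_univ_add]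
  simp [root_glue_cast hl hr F₁ F₂, root_glue_nat hl hr F₁ F₂,
    castAdd_inj_iff, natAdd_eq_castAdd_iff]

lemma compSize_glue_nat (F₁ : ISF h₁) (F₂ : ISF h₂) (r : Fin n₂) :
    (glueISF hl hr F₁ F₂).compSize (Fin.natAdd n₁ r) = F₂.compSize r := by
  unfold ISF.compSize
  rw [Finset.card_filter, Finset.card_filter, Fin.sum_univ_add]
  simp [root_glue_cast hl hr F₁ F₂, root_glue_nat hl hr F₁ F₂,
    natAdd_inj_iff, castAdd_eq_natAdd_iff]

lemma inv_glue (F₁ : ISF h₁) (F₂ : ISF h₂) :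
    (glueISF hl hr F₁ F₂).inv = F₁.inv + F₂.inv := by
  unfold ISF.inv
  simp only [Finset.card_filter, Fintype.sum_prod_type, Fin.sum_univ_add]
  simp [root_glue_cast hl hr F₁ F₂, root_glue_nat hl hr F₁ F₂,
    castAdd_lt_iff, natAdd_lt_iff, natAdd_lt_castAdd_iff,
    le_m_cast_iff hl, natAdd_le_m_cast_iff hl, le_m_nat_iff hr]

lemma edgeLen_glue_cast (F₁ : ISF h₁) (F₂ : ISF h₂) (j : Fin n₁) :
    (glueISF hl hr F₁ F₂).edgeLen (Fin.castAdd n₂ j) = F₁.edgeLen j := by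
  unfold ISF.edgeLen
  have hq : (glueISF hl hr F₁ F₂).1 (Fin.castAdd n₂ j) = (F₁.1 j).map (Fin.castAdd n₂) :=
    glue_castAdd _ _ j
  rw [hq]
  cases hgj : F₁.1 j with
  | none => rfl
  | some u =>
    simp only [Option.map_some, Option.elim]
    rw [Finset.card_filter, Finset.card_filter, Fin.sum_univ_add]
    simp [root_glue_cast hl hr F₁ F₂, root_glue_nat hl hr F₁ F₂,
      castAdd_inj_iff, natAdd_eq_castAdd_iff, castAdd_lt_iff, natAdd_lt_castAdd_iff]

lemma edgeLen_glue_nat (F₁ : ISF h₁) (F₂ : ISF h₂) (j : Fin n₂) :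
    (glueISF hl hr F₁ F₂).edgeLen (Fin.natAdd n₁ j) = F₂.edgeLen j := by
  unfold ISF.edgeLen
  have hq : (glueISF hl hr F₁ F₂).1 (Fin.natAdd n₁ j) = (F₂.1 j).map (Fin.natAdd n₁) :=
    glue_natAdd _ _ j
  rw [hq]
  cases hgj : F₂.1 j with
  | none => rfl
  | some u =>
    simp only [Option.map_some, Option.elim]
    rw [Finset.card_filter, Finset.card_filter, Fin.sum_univ_add]
    simp [root_glue_cast hl hr F₁ F₂, root_glue_nat hl hr F₁ F₂,
      natAdd_inj_iff, castAdd_eq_natAdd_iff, natAdd_lt_iff, natAdd_lt_castAdd_iff]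

lemma wt_glue (F₁ : ISF h₁) (F₂ : ISF h₂) :
    (glueISF hl hr F₁ F₂).wt = F₁.wt + F₂.wt := by
  unfold ISF.wt
  rw [inv_glue hl hr F₁ F₂, Fin.sum_univ_add]
  simp only [edgeLen_glue_cast hl hr F₁ F₂, edgeLen_glue_nat hl hr F₁ F₂]
  omega

lemma yProd_glue {R : Type*} [CommRing R] (y : ℕ → R) (F₁ : ISF h₁) (F₂ : ISF h₂) :
    yProd y (glueISF hl hr F₁ F₂) = yProd y F₁ * yProd y F₂ := by
  unfold yProd ISF.roots
  rw [Finset.prod_filter, Finset.prod_filter, Finset.prod_filter, Fin.prod_univ_add]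
  congr 1
  · refine Finset.prod_congr rfl fun i _ => ?_
    have hq : (glueISF hl hr F₁ F₂).1 (Fin.castAdd n₂ i) = (F₁.1 i).map (Fin.castAdd n₂) :=
      glue_castAdd _ _ i
    rw [hq]
    cases F₁.1 i with
    | none => simp [compSize_glue_cast hl hr F₁ F₂]
    | some u => simp
  · refine Finset.prod_congr rfl fun i _ => ?_
    have hq : (glueISF hl hr F₁ F₂).1 (Fin.natAdd n₁ i) = (F₂.1 i).map (Fin.natAdd n₁) :=
      glue_natAdd _ _ i
    rw [hq]
    cases F₂.1 i with
    | none => simp [compSize_glue_nat hl hr F₁ F₂]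
    | some u => simp

end Transfer
set_option maxRecDepth 8000 in
/-- `X` is multiplicative: if `m` is the ordered union of `m₁` and `m₂`
(i.e. `m` agrees with `m₁` on the first `n₁` vertices and with the shift of `m₂` on the
last `n₂` vertices), then `X(m) = X(m₁) · X(m₂)`. -/
theorem Xfun_multiplicative (R : Type*) [CommRing R] (q : R) (y : ℕ → R)
    (n₁ n₂ : ℕ) (h₁ : Hessenberg n₁) (h₂ : Hessenberg n₂) (h : Hessenberg (n₁ + n₂))
    (hleft : ∀ i : Fin n₁, (h.m (Fin.castAdd n₂ i) : ℕ) = (h₁.m i : ℕ))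
    (hright : ∀ i : Fin n₂, (h.m (Fin.natAdd n₁ i) : ℕ) = n₁ + (h₂.m i : ℕ)) :
    Xfun q y h = Xfun q y h₁ * Xfun q y h₂ := by
  classical
  let e : ISF h₁ × ISF h₂ ≃ ISF h :=
    { toFun := fun p => glueISF hleft hright p.1 p.2
      invFun := fun F => (splitF₁ hleft F, splitF₂ hright F)
      left_inv := fun p => by
        have := split_glue₁ hleft hright p.1 p.2
        have := split_glue₂ hleft hright p.1 p.2
        simp_all [Prod.ext_iff]
      right_inv := glue_split hleft hright }
  calc Xfun q y h
      = ∑ p : ISF h₁ × ISF h₂,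
          q ^ (glueISF hleft hright p.1 p.2).wt * yProd y (glueISF hleft hright p.1 p.2) :=
        (Fintype.sum_equiv e _ (fun F => q ^ F.wt * yProd y F) (fun p => rfl)).symm
    _ = ∑ p : ISF h₁ × ISF h₂,
          (q ^ p.1.wt * yProd y p.1) * (q ^ p.2.wt * yProd y p.2) := by
        refine Finset.sum_congr rfl fun p _ => ?_
        rw [wt_glue hleft hright p.1 p.2, yProd_glue hleft hright y p.1 p.2, pow_add]
        ring
    _ = Xfun q y h₁ * Xfun q y h₂ := by
        rw [Xfun, Xfun, Finset.sum_mul_sum, Fintype.sum_prod_type]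
end

section
/- Let n ≥ 1 and let m be a Hessenberg function on {1,…,n}. Then the following identity holds in ℤ[q]: Σ_{σ ≤ m} q^{wt_m(σ)} = Π_{i=1}^{n} (1 + [m(i) − i]_q), where [j]_q := 1 + q + ⋯ + q^{j−1} (so [0]_q = 0). -/
open Finset

/-- The word `σ^c` obtained from `σ` by writing it in cycle notation, each cycle
starting with its least element and the cycles ordered by increasing least elements,
and erasing the parentheses: we scan the elements in increasing order and, whenever
an element is the least element of its cycle, we emit its whole cycle. -/
noncomputable def permWord {n : ℕ} (σ : Equiv.Perm (Fin n)) : List (Fin n) :=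
  (List.finRange n).flatMap (fun x =>
    if ∀ i : Fin n, x ≤ (σ ^ (i : ℕ)) x then
      (List.range (Function.minimalPeriod (⇑σ) x)).map (fun i => (σ ^ i) x)
    else [])

/-- `inv_m(τ)`: the number of pairs `(i,j)` with `i < j ≤ m i` (an edge of `G_m`)
such that `i` appears after `j` in the word `τ`. -/
def invWord {n : ℕ} (h : Hessenberg n) (τ : List (Fin n)) : ℕ :=
  (Finset.univ.filter (fun p : Fin n × Fin n =>
    p.1 < p.2 ∧ p.2 ≤ h.m p.1 ∧ τ.idxOf p.2 < τ.idxOf p.1)).card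

/-- `wt_m(σ) = inv_m(σ^c)`. -/
noncomputable def wtPerm {n : ℕ} (h : Hessenberg n) (σ : Equiv.Perm (Fin n)) : ℕ :=
  invWord h (permWord σ)

namespace HessAux


open Equiv List Function

variable {n : ℕ}

noncomputable def blockOf (σ : Equiv.Perm (Fin n)) (x : Fin n) : List (Fin n) :=
  if ∀ i : Fin n, x ≤ (σ ^ (i : ℕ)) x then
    (List.range (Function.minimalPeriod (⇑σ) x)).map (fun i => (σ ^ i) x)
  else []

lemma permWord_eq (σ : Equiv.Perm (Fin n)) :
    permWord σ = (List.finRange n).flatMap (blockOf σ) := rfl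

lemma pow_apply_iterate (σ : Equiv.Perm (Fin n)) (i : ℕ) (x : Fin n) :
    (σ ^ i) x = (⇑σ)^[i] x := by rw [Equiv.Perm.coe_pow]

lemma isPeriodic (σ : Equiv.Perm (Fin n)) (x : Fin n) :
    Function.IsPeriodicPt (⇑σ) (orderOf σ) x := by
  unfold Function.IsPeriodicPt Function.IsFixedPt
  rw [← pow_apply_iterate, pow_orderOf_eq_one]; rfl

lemma mp_pos (σ : Equiv.Perm (Fin n)) (x : Fin n) :
    0 < Function.minimalPeriod (⇑σ) x :=
  Function.IsPeriodicPt.minimalPeriod_pos (orderOf_pos σ) (isPeriodic σ x)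

lemma mp_period (σ : Equiv.Perm (Fin n)) (x : Fin n) :
    (σ ^ Function.minimalPeriod (⇑σ) x) x = x := by
  rw [pow_apply_iterate]; exact Function.iterate_minimalPeriod

lemma pow_mod_mp (σ : Equiv.Perm (Fin n)) (x : Fin n) (i : ℕ) :
    (σ ^ (i % Function.minimalPeriod (⇑σ) x)) x = (σ ^ i) x := by
  rw [pow_apply_iterate, pow_apply_iterate]
  exact Function.iterate_mod_minimalPeriod_eq

lemma mp_le (σ : Equiv.Perm (Fin n)) (x : Fin n) :
    Function.minimalPeriod (⇑σ) x ≤ n := by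
  have h : Set.InjOn (fun i => (⇑σ)^[i] x) (Set.Iio (Function.minimalPeriod (⇑σ) x)) :=
    Function.iterate_injOn_Iio_minimalPeriod
  have : (Finset.range (Function.minimalPeriod (⇑σ) x)).card ≤ (Finset.univ : Finset (Fin n)).card := by
    apply Finset.card_le_card_of_injOn (fun i => (⇑σ)^[i] x) (fun a _ => Finset.mem_univ _)
    intro a ha b hb hab
    exact h (by simpa using ha) (by simpa using hb) hab
  simpa using this

lemma mp_inj (σ : Equiv.Perm (Fin n)) (x : Fin n) {i j : ℕ}
    (hi : i < Function.minimalPeriod (⇑σ) x) (hj : j < Function.minimalPeriod (⇑σ) x)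
    (h : (σ ^ i) x = (σ ^ j) x) : i = j := by
  have := Function.iterate_injOn_Iio_minimalPeriod (f := ⇑σ) (x := x)
  exact this (Set.mem_Iio.2 hi) (Set.mem_Iio.2 hj)
    (by simp only [← pow_apply_iterate]; exact h)

lemma pow_succ_apply (σ : Equiv.Perm (Fin n)) (i : ℕ) (x : Fin n) :
    (σ ^ (i+1)) x = σ ((σ ^ i) x) := by
  rw [pow_succ']; rfl

lemma cmin_iff (σ : Equiv.Perm (Fin n)) (x : Fin n) :
    (∀ i : Fin n, x ≤ (σ ^ (i : ℕ)) x) ↔ ∀ i : ℕ, x ≤ (σ ^ i) x := by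
  constructor
  · intro h i
    have hlt : i % Function.minimalPeriod (⇑σ) x < n :=
      lt_of_lt_of_le (Nat.mod_lt _ (mp_pos σ x)) (mp_le σ x)
    have := h ⟨i % Function.minimalPeriod (⇑σ) x, hlt⟩
    simpa [pow_mod_mp] using this
  · intro h i; exact h i

lemma mp_congr {σ τ : Equiv.Perm (Fin n)} {x : Fin n}
    (h : ∀ i : ℕ, (σ ^ i) x = (τ ^ i) x) :
    Function.minimalPeriod (⇑σ) x = Function.minimalPeriod (⇑τ) x := by
  have key : ∀ (σ τ : Equiv.Perm (Fin n)), (∀ i : ℕ, (σ ^ i) x = (τ ^ i) x) →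
      Function.minimalPeriod (⇑τ) x ≤ Function.minimalPeriod (⇑σ) x := by
    intro σ τ h
    apply Function.IsPeriodicPt.minimalPeriod_le (mp_pos σ x)
    unfold Function.IsPeriodicPt Function.IsFixedPt
    rw [← pow_apply_iterate, ← h, mp_period]
  exact le_antisymm (key τ σ (fun i => (h i).symm)) (key σ τ h)

lemma blockOf_congr {σ τ : Equiv.Perm (Fin n)} {x : Fin n}
    (h : ∀ i : ℕ, (σ ^ i) x = (τ ^ i) x) : blockOf σ x = blockOf τ x := by
  unfold blockOf
  have hc : (∀ i : Fin n, x ≤ (σ ^ (i : ℕ)) x) ↔ (∀ i : Fin n, x ≤ (τ ^ (i : ℕ)) x) := by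
    constructor <;> intro hh i <;> [rw [← h]; rw [h]] <;> exact hh i
  rw [mp_congr h]
  by_cases hco : ∀ i : Fin n, x ≤ (τ ^ (i : ℕ)) x
  · rw [if_pos (hc.2 hco), if_pos hco]
    exact List.map_congr_left (fun i _ => h i)
  · rw [if_neg (fun hh => hco (hc.1 hh)), if_neg hco]

lemma blockOf_fixed {σ : Equiv.Perm (Fin n)} {x : Fin n} (hx : σ x = x) :
    blockOf σ x = [x] := by
  have hpow : ∀ i : ℕ, (σ ^ i) x = x := by
    intro i; rw [pow_apply_iterate]; exact Function.iterate_fixed hx i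
  unfold blockOf
  rw [if_pos (fun i => le_of_eq (hpow _).symm)]
  have h1 : Function.minimalPeriod (⇑σ) x = 1 :=
    Function.minimalPeriod_eq_one_iff_isFixedPt.2 hx
  simp [h1, List.range_succ]

lemma blockOf_nonfix {σ : Equiv.Perm (Fin n)} {x : Fin n} (hx : ∃ i : ℕ, (σ ^ i) x < x) :
    blockOf σ x = [] := by
  unfold blockOf
  rw [if_neg]
  intro h
  obtain ⟨i, hi⟩ := hx
  exact absurd ((cmin_iff σ x).1 h i) (not_le.2 hi)

lemma blockOf_mem {σ : Equiv.Perm (Fin n)} {x y : Fin n} (h : y ∈ blockOf σ x) :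
    ∃ i : ℕ, (σ ^ i) x = y := by
  unfold blockOf at h
  by_cases hc : ∀ i : Fin n, x ≤ (σ ^ (i : ℕ)) x
  · rw [if_pos hc] at h
    obtain ⟨i, _, hi⟩ := List.mem_map.1 h
    exact ⟨i, hi⟩
  · rw [if_neg hc] at h; simp at h

lemma exists_min_rep (σ : Equiv.Perm (Fin n)) (x : Fin n) :
    ∃ a, σ.SameCycle x a ∧ ∀ i : ℕ, a ≤ (σ ^ i) a := by
  classical
  set S : Finset (Fin n) := Finset.univ.filter (fun y => σ.SameCycle x y) with hS
  have hxS : x ∈ S := by simp [hS, Equiv.Perm.SameCycle.refl]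
  have hne : S.Nonempty := ⟨x, hxS⟩
  refine ⟨S.min' hne, (Finset.mem_filter.1 (S.min'_mem hne)).2, ?_⟩
  intro i
  apply S.min'_le
  refine Finset.mem_filter.2 ⟨Finset.mem_univ _, ?_⟩
  exact ((Finset.mem_filter.1 (S.min'_mem hne)).2).trans ⟨(i : ℤ), by simp [zpow_natCast]⟩

lemma sc_exists_nat {σ : Equiv.Perm (Fin n)} {x y : Fin n} (h : σ.SameCycle x y) :
    ∃ i : ℕ, (σ ^ i) x = y := by
  obtain ⟨i, _, _, hi⟩ := Equiv.Perm.SameCycle.exists_pow_eq σ h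
  exact ⟨i, hi⟩



open List

variable {α : Type*} [DecidableEq α]

lemma idx_append_left {l₁ l₂ : List α} {x : α} (h : x ∈ l₁) :
    (l₁ ++ l₂).idxOf x = l₁.idxOf x := List.idxOf_append_of_mem h

lemma idx_append_right {l₁ l₂ : List α} {x : α} (h : x ∉ l₁) :
    (l₁ ++ l₂).idxOf x = l₁.length + l₂.idxOf x := List.idxOf_append_of_notMem h

lemma idx_cons_ne {l : List α} {x b : α} (h : b ≠ x) :
    (b :: l).idxOf x = (l.idxOf x) + 1 := List.idxOf_cons_ne l h

/-- x in the left part, y not in the left part: x comes before y. -/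
lemma idx_lt_of_left {l₁ l₂ : List α} {x y : α} (hx : x ∈ l₁) (hy : y ∉ l₁) :
    (l₁ ++ l₂).idxOf x < (l₁ ++ l₂).idxOf y := by
  rw [idx_append_left hx, idx_append_right hy]
  exact lt_of_lt_of_le (List.idxOf_lt_length_iff.2 hx) (Nat.le_add_right _ _)

lemma idx_erase_lt_iff {l : List α} {a x y : α} (hnd : l.Nodup)
    (hx : x ∈ l) (hy : y ∈ l) (hxa : x ≠ a) (hya : y ≠ a) :
    (l.erase a).idxOf x < (l.erase a).idxOf y ↔ l.idxOf x < l.idxOf y := by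
  induction l with
  | nil => simp at hx
  | cons b t ih =>
    by_cases hxy : x = y
    · subst hxy; simp
    have hbt : b ∉ t := (List.nodup_cons.1 hnd).1
    have hndt : t.Nodup := (List.nodup_cons.1 hnd).2
    by_cases hba : b = a
    · subst hba
      have hxt : x ∈ t := (List.mem_cons.1 hx).resolve_left hxa
      have hyt : y ∈ t := (List.mem_cons.1 hy).resolve_left hya
      rw [List.erase_cons_head]
      rw [idx_cons_ne (Ne.symm hxa), idx_cons_ne (Ne.symm hya)]
      omega
    · rw [List.erase_cons_tail (by simpa using hba)]
      by_cases hxb : x = b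
      · subst hxb
        have hyt : y ∈ t := (List.mem_cons.1 hy).resolve_left (fun h => hxy h.symm)
        have hyet : y ∈ t.erase a := List.mem_erase_of_ne hya |>.2 hyt
        rw [List.idxOf_cons_self, List.idxOf_cons_self,
          idx_cons_ne hxy, idx_cons_ne hxy]
        omega
      · by_cases hyb : y = b
        · subst hyb
          rw [List.idxOf_cons_self, List.idxOf_cons_self,
            idx_cons_ne (Ne.symm hxb), idx_cons_ne (Ne.symm hxb)]
          simp
        · have hxt : x ∈ t := (List.mem_cons.1 hx).resolve_left hxb
          have hyt : y ∈ t := (List.mem_cons.1 hy).resolve_left hyb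
          rw [idx_cons_ne (Ne.symm hxb), idx_cons_ne (Ne.symm hyb),
            idx_cons_ne (Ne.symm hxb), idx_cons_ne (Ne.symm hyb)]
          have := ih hndt hxt hyt
          omega

/-- Split a strictly ordered list at two of its elements. -/
lemma sorted_split [LinearOrder α] : ∀ {L : List α} {a k : α}, L.Pairwise (· < ·) →
    a ∈ L → k ∈ L → a < k → ∃ L₁ L₂ L₃, L = L₁ ++ a :: L₂ ++ k :: L₃
  | [], a, k, _, ha, _, _ => by simp at ha
  | c :: t, a, k, hp, ha, hk, hak => by
    have hpt : t.Pairwise (· < ·) := (List.pairwise_cons.1 hp).2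
    have hct : ∀ x ∈ t, c < x := (List.pairwise_cons.1 hp).1
    by_cases hca : c = a
    · subst hca
      have hkt : k ∈ t := (List.mem_cons.1 hk).resolve_left (fun h => lt_irrefl _ (h ▸ hak))
      obtain ⟨u, v, huv⟩ := List.append_of_mem hkt
      exact ⟨[], u, v, by rw [huv]; simp⟩
    · have hat : a ∈ t := (List.mem_cons.1 ha).resolve_left (fun h => hca h.symm)
      have hkt : k ∈ t := (List.mem_cons.1 hk).resolve_left
        (fun h => absurd (h ▸ hct a hat) (not_lt.2 (le_of_lt hak)))
      obtain ⟨L₁, L₂, L₃, hL⟩ := sorted_split hpt hat hkt hak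
      exact ⟨c :: L₁, L₂, L₃, by rw [hL]; simp⟩



section Struct
variable {n : ℕ}

open Equiv List Function

theorem insert_struct (σ' : Equiv.Perm (Fin n)) (k j : Fin n)
    (hfix : ∀ x : Fin n, k ≤ x → σ' x = x) (hjk : j < k) :
    ∃ A B C : List (Fin n),
      permWord σ' = A ++ j :: (B ++ k :: C) ∧
      permWord (σ' * Equiv.swap j k) = A ++ j :: k :: (B ++ C) ∧
      (∀ x ∈ A, x < k) ∧ (∀ x ∈ B, x < k) ∧ (∀ x ∈ C, k < x) := by
  classical
  set σ := σ' * Equiv.swap j k with hσdef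
  have happ : ∀ x, σ x = σ' (Equiv.swap j k x) := fun x => rfl
  have hk' : σ' k = k := hfix k le_rfl
  have hσj : σ j = k := by rw [happ, Equiv.swap_apply_left, hk']
  have hσk : σ k = σ' j := by rw [happ, Equiv.swap_apply_right]
  have hσne : ∀ x, x ≠ j → x ≠ k → σ x = σ' x := fun x h1 h2 => by
    rw [happ, Equiv.swap_apply_of_ne_of_ne h1 h2]
  have horder : 0 < orderOf σ' := orderOf_pos σ'
  have hlt : ∀ r : Fin n, r < k → ∀ i : ℕ, (σ' ^ i) r < k := by
    intro r hr i
    by_contra hge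
    push_neg at hge
    set y := (σ' ^ i) r with hy
    have hyfix : σ' y = y := hfix y hge
    have hyp : ∀ s : ℕ, (σ' ^ s) y = y := fun s => by
      rw [pow_apply_iterate]; exact Function.iterate_fixed hyfix s
    have hM : (σ' ^ (orderOf σ' * i)) r = r := by
      rw [pow_mul, pow_orderOf_eq_one]; simp
    have h2 : (σ' ^ (orderOf σ' * i)) r = y := by
      have he : orderOf σ' * i = (orderOf σ' * i - i) + i := by
        have : i ≤ orderOf σ' * i := Nat.le_mul_of_pos_left i horder
        omega
      rw [he, pow_add, Equiv.Perm.mul_apply, ← hy, hyp]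
    rw [hM] at h2
    rw [h2] at hr
    exact absurd hge (not_le.2 hr)
  have hj' : σ' j < k := by
    have := hlt j hjk 1; rwa [pow_one] at this
  have hpow_ne_k : ∀ (r : Fin n), r < k → ∀ i : ℕ, (σ' ^ i) r ≠ k :=
    fun r hr i => ne_of_lt (hlt r hr i)
  have hA : ∀ x : Fin n, x ≠ k → ¬ σ'.SameCycle j x → ∀ i : ℕ, (σ ^ i) x = (σ' ^ i) x := by
    intro x hxk hsc i
    induction i with
    | zero => simp
    | succ i ih =>
      have hne_j : (σ' ^ i) x ≠ j := by
        intro hh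
        exact hsc (Equiv.Perm.SameCycle.symm ⟨(i : ℤ), by simpa [zpow_natCast] using hh⟩)
      have hne_k : (σ' ^ i) x ≠ k := by
        intro hh
        apply hxk
        have hfixk : (σ' ^ i) k = k := by
          rw [pow_apply_iterate]; exact Function.iterate_fixed hk' i
        exact (σ' ^ i).injective (hh.trans hfixk.symm)
      rw [pow_succ_apply, pow_succ_apply, ih, hσne _ hne_j hne_k]
  obtain ⟨a, hsc_ja, hamin⟩ := exists_min_rep σ' j
  have haj : a ≤ j := by
    obtain ⟨i, hi⟩ := sc_exists_nat hsc_ja.symm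
    rw [← hi]; exact hamin i
  have hak : a < k := lt_of_le_of_lt haj hjk
  have hex : ∃ i : ℕ, (σ' ^ i) a = j := sc_exists_nat hsc_ja.symm
  set t := Nat.find hex with ht_def
  have ht : (σ' ^ t) a = j := Nat.find_spec hex
  have htmin : ∀ s, s < t → (σ' ^ s) a ≠ j := fun s hs => Nat.find_min hex hs
  set p := Function.minimalPeriod (⇑σ') a with hp_def
  have hp : 0 < p := mp_pos σ' a
  have hpa : (σ' ^ p) a = a := mp_period σ' a
  have htp : t < p := by
    have h1 : (σ' ^ (t % p)) a = j := by rw [pow_mod_mp]; exact ht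
    have h2 : t ≤ t % p := Nat.find_min' hex h1
    have h3 := Nat.mod_lt t hp
    omega
  have hF5 : ∀ i, i ≤ t → (σ ^ i) a = (σ' ^ i) a := by
    intro i hi
    induction i with
    | zero => simp
    | succ i ih =>
      rw [pow_succ_apply, pow_succ_apply, ih (by omega),
        hσne _ (htmin i (by omega)) (hpow_ne_k a hak i)]
  have hF6 : (σ ^ (t+1)) a = k := by
    rw [pow_succ_apply, hF5 t le_rfl, ht, hσj]
  have hF7 : ∀ s, 1 ≤ s → t + s ≤ p → (σ ^ (t+1+s)) a = (σ' ^ (t+s)) a := by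
    intro s hs1 hsp
    induction s with
    | zero => omega
    | succ s ih =>
      by_cases hs0 : s = 0
      · subst hs0
        rw [show t+1+(0+1) = (t+1)+1 from by omega, pow_succ_apply, hF6, hσk,
          show t+(0+1) = t+1 from by omega, pow_succ_apply, ht]
      · have hnej : (σ' ^ (t+s)) a ≠ j := by
          intro hh
          have heq : t + s = t := mp_inj σ' a (by omega) htp (hh.trans ht.symm)
          omega
        rw [show t+1+(s+1) = (t+1+s)+1 from by omega, pow_succ_apply,
          ih (by omega) (by omega), hσne _ hnej (hpow_ne_k a hak (t+s)),
          show t+(s+1) = (t+s)+1 from by omega, pow_succ_apply]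
  have hF8 : (σ ^ (p+1)) a = a := by
    have h := hF7 (p - t) (by omega) (by omega)
    rw [show t+1+(p-t) = p+1 from by omega, show t+(p-t) = p from by omega] at h
    rw [h, hpa]
  have hval : ∀ i, i < p+1 → i ≠ t+1 → (σ ^ i) a = (σ' ^ (if i ≤ t then i else i - 1)) a := by
    intro i hi hne
    by_cases h : i ≤ t
    · rw [if_pos h]; exact hF5 i h
    · rw [if_neg h]
      have h7 := hF7 (i - t - 1) (by omega) (by omega)
      rw [show t+1+(i-t-1) = i from by omega, show t+(i-t-1) = i-1 from by omega] at h7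
      exact h7
  have hdist : ∀ i₁ i₂, i₁ < i₂ → i₂ < p + 1 → (σ ^ i₁) a ≠ (σ ^ i₂) a := by
    intro i₁ i₂ h12 h2p heq
    by_cases e1 : i₁ = t+1
    · by_cases e2 : i₂ = t+1
      · omega
      · rw [e1, hF6, hval i₂ h2p e2] at heq
        exact hpow_ne_k a hak _ heq.symm
    · by_cases e2 : i₂ = t+1
      · rw [e2, hF6, hval i₁ (by omega) e1] at heq
        exact hpow_ne_k a hak _ heq
      · rw [hval i₁ (by omega) e1, hval i₂ h2p e2] at heq
        have he1 : (if i₁ ≤ t then i₁ else i₁ - 1) < p := by split <;> omega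
        have he2 : (if i₂ ≤ t then i₂ else i₂ - 1) < p := by split <;> omega
        have heq2 := mp_inj σ' a he1 he2 heq
        by_cases c1 : i₁ ≤ t <;> by_cases c2 : i₂ ≤ t <;> simp [c1, c2] at heq2 <;> omega
  have hmpσ : Function.minimalPeriod (⇑σ) a = p + 1 := by
    have hper : Function.IsPeriodicPt (⇑σ) (p+1) a := by
      show (⇑σ)^[p+1] a = a
      rw [← pow_apply_iterate]; exact hF8
    have hle : Function.minimalPeriod (⇑σ) a ≤ p + 1 := hper.minimalPeriod_le (by omega)
    have hpos : 0 < Function.minimalPeriod (⇑σ) a := mp_pos σ a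
    by_contra hne
    have hlt' : Function.minimalPeriod (⇑σ) a < p + 1 := by omega
    have hmp : (σ ^ Function.minimalPeriod (⇑σ) a) a = (σ ^ 0) a := by
      rw [mp_period]; simp
    exact hdist 0 _ hpos hlt' hmp.symm
  have hcminσ : ∀ i : ℕ, a ≤ (σ ^ i) a := by
    intro i
    have hmod : (σ ^ (i % (p+1))) a = (σ ^ i) a := by
      rw [← hmpσ]; exact pow_mod_mp σ a i
    rw [← hmod]
    have hr : i % (p+1) < p + 1 := Nat.mod_lt _ (by omega)
    by_cases hrt : i % (p+1) = t+1
    · rw [hrt, hF6]; exact le_of_lt hak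
    · rw [hval _ hr hrt]; exact hamin _
  set P1 : List (Fin n) := (List.range t).map (fun i => (σ' ^ i) a) with hP1
  set P2 : List (Fin n) := (List.range (p - (t+1))).map (fun s => (σ' ^ (t+1+s)) a) with hP2
  have hblock' : blockOf σ' a = P1 ++ j :: P2 := by
    unfold blockOf
    rw [if_pos ((cmin_iff σ' a).2 hamin), ← hp_def,
      show p = (t+1) + (p - (t+1)) from by omega, List.range_add, List.map_append,
      List.range_succ, List.map_append, List.map_map]
    simp only [List.map_cons, List.map_nil, ht, Function.comp_def]
    simp [hP1, hP2, List.append_assoc]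
  have hblockσ : blockOf σ a = P1 ++ j :: k :: P2 := by
    unfold blockOf
    rw [if_pos ((cmin_iff σ a).2 hcminσ), hmpσ,
      show p + 1 = ((t+1) + 1) + (p - (t+1)) from by omega, List.range_add, List.map_append,
      List.range_succ, List.map_append, List.range_succ, List.map_append, List.map_map]
    have e1 : List.map (fun i => (σ ^ i) a) (List.range t) = P1 := by
      apply List.map_congr_left
      intro i hi
      exact hF5 i (le_of_lt (List.mem_range.1 hi))
    have e2 : (σ ^ t) a = j := (hF5 t le_rfl).trans ht
    have e4 : List.map ((fun i => (σ ^ i) a) ∘ (fun s => (t+1)+1+s)) (List.range (p - (t+1))) = P2 := by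
      apply List.map_congr_left
      intro s hs
      have hs' : s < p - (t+1) := List.mem_range.1 hs
      show (σ ^ ((t+1)+1+s)) a = (σ' ^ (t+1+s)) a
      have h := hF7 (s+1) (by omega) (by omega)
      rw [show t+1+(s+1) = (t+1)+1+s from by omega,
        show t+(s+1) = t+1+s from by omega] at h
      exact h
    simp only [List.map_cons, List.map_nil, e1, e2, hF6, e4]
    simp [hP1, hP2, List.append_assoc]
  have hbk : blockOf σ k = [] := by
    apply blockOf_nonfix
    exact ⟨1, by rw [pow_one, hσk]; exact hj'⟩
  have hbx : ∀ x : Fin n, x ≠ a → x ≠ k → blockOf σ x = blockOf σ' x := by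
    intro x hxa hxk
    by_cases hsc : σ'.SameCycle j x
    · have hsc_xa : σ'.SameCycle x a := hsc.symm.trans hsc_ja
      obtain ⟨i₀, hi₀⟩ := sc_exists_nat hsc_xa
      have hax : σ'.SameCycle a x := hsc_ja.symm.trans hsc
      obtain ⟨s₀, hs₀⟩ := sc_exists_nat hax
      have hs : (σ' ^ (s₀ % p)) a = x := by rw [pow_mod_mp]; exact hs₀
      have hsp : s₀ % p < p := Nat.mod_lt _ hp
      have hax_le : a ≤ x := by rw [← hs]; exact hamin _
      have haxlt : a < x := lt_of_le_of_ne hax_le (fun h => hxa h.symm)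
      have hb1 : blockOf σ' x = [] := blockOf_nonfix ⟨i₀, by rw [hi₀]; exact haxlt⟩
      have hxi : ∃ i₁, i₁ ≤ p ∧ (σ ^ i₁) a = x := by
        by_cases hst : s₀ % p ≤ t
        · exact ⟨s₀ % p, by omega, (hF5 _ hst).trans hs⟩
        · refine ⟨s₀ % p + 1, by omega, ?_⟩
          have h := hF7 (s₀ % p - t) (by omega) (by omega)
          rw [show t+1+(s₀ % p-t) = s₀ % p+1 from by omega,
            show t+(s₀ % p-t) = s₀ % p from by omega] at h
          rw [h]; exact hs
      obtain ⟨i₁, hi₁p, hi₁⟩ := hxi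
      have hb2 : blockOf σ x = [] := by
        apply blockOf_nonfix
        refine ⟨p+1-i₁, ?_⟩
        have hback : (σ ^ (p+1-i₁)) x = a := by
          rw [← hi₁, ← Equiv.Perm.mul_apply, ← pow_add,
            show p+1-i₁+i₁ = p+1 from by omega, hF8]
        rw [hback]; exact haxlt
      rw [hb1, hb2]
    · exact blockOf_congr (hA x hxk hsc)
  -- assemble the words
  obtain ⟨L₁, L₂, L₃, hL⟩ := sorted_split (List.pairwise_lt_finRange n)
    (List.mem_finRange a) (List.mem_finRange k) hak
  have hpw := List.pairwise_lt_finRange n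
  rw [hL] at hpw
  rw [List.pairwise_append] at hpw
  obtain ⟨hpw1, hpw2, hpw3⟩ := hpw
  rw [List.pairwise_cons] at hpw2
  have hL3lt : ∀ x ∈ L₃, k < x := fun x hx => hpw2.1 x hx
  rw [List.pairwise_append] at hpw1
  obtain ⟨hpw1a, hpw1b, hpw1c⟩ := hpw1
  rw [List.pairwise_cons] at hpw1b
  have hL1lt : ∀ x ∈ L₁, x < a := fun x hx => hpw1c x hx a (by simp)
  have hL2lt : ∀ x ∈ L₂, a < x ∧ x < k := fun x hx =>
    ⟨hpw1b.1 x hx, hpw3 x (by simp [hx]) k (by simp)⟩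
  have hcg : ∀ (L : List (Fin n)), (∀ x ∈ L, x ≠ a ∧ x ≠ k) →
      L.flatMap (blockOf σ) = L.flatMap (blockOf σ') := by
    intro L hLx
    rw [List.flatMap_def, List.flatMap_def]
    congr 1
    exact List.map_congr_left (fun x hx => hbx x (hLx x hx).1 (hLx x hx).2)
  have hcg1 : L₁.flatMap (blockOf σ) = L₁.flatMap (blockOf σ') :=
    hcg L₁ (fun x hx => ⟨ne_of_lt (hL1lt x hx), ne_of_lt (lt_trans (hL1lt x hx) hak)⟩)
  have hcg2 : L₂.flatMap (blockOf σ) = L₂.flatMap (blockOf σ') :=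
    hcg L₂ (fun x hx => ⟨ne_of_gt (hL2lt x hx).1, ne_of_lt (hL2lt x hx).2⟩)
  have hcg3 : L₃.flatMap (blockOf σ) = L₃.flatMap (blockOf σ') :=
    hcg L₃ (fun x hx => ⟨ne_of_gt (lt_trans hak (hL3lt x hx)), ne_of_gt (hL3lt x hx)⟩)
  refine ⟨L₁.flatMap (blockOf σ') ++ P1, P2 ++ L₂.flatMap (blockOf σ'),
    L₃.flatMap (blockOf σ'), ?_, ?_, ?_, ?_, ?_⟩
  · rw [permWord_eq, hL]
    simp only [List.flatMap_append, List.flatMap_cons, hblock', blockOf_fixed hk']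
    simp [List.append_assoc]
  · rw [permWord_eq, hL]
    simp only [List.flatMap_append, List.flatMap_cons, hblockσ, hbk, hcg1, hcg2, hcg3]
    simp [List.append_assoc]
  · intro x hx
    rcases List.mem_append.1 hx with hx | hx
    · obtain ⟨r, hr, hxr⟩ := List.mem_flatMap.1 hx
      obtain ⟨i, hi⟩ := blockOf_mem hxr
      rw [← hi]; exact hlt r (lt_trans (hL1lt r hr) hak) i
    · obtain ⟨i, _, hi⟩ := List.mem_map.1 hx
      rw [← hi]; exact hlt a hak i
  · intro x hx
    rcases List.mem_append.1 hx with hx | hx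
    · obtain ⟨i, _, hi⟩ := List.mem_map.1 hx
      rw [← hi]; exact hlt a hak _
    · obtain ⟨r, hr, hxr⟩ := List.mem_flatMap.1 hx
      obtain ⟨i, hi⟩ := blockOf_mem hxr
      rw [← hi]; exact hlt r (hL2lt r hr).2 i
  · intro x hx
    obtain ⟨r, hr, hxr⟩ := List.mem_flatMap.1 hx
    rw [blockOf_fixed (hfix r (le_of_lt (hL3lt r hr)))] at hxr
    simp at hxr
    rw [hxr]; exact hL3lt r hr

end Struct

section PermWord
variable {n : ℕ}
open Equiv List Function

lemma permWord_one : permWord (1 : Equiv.Perm (Fin n)) = List.finRange n := by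
  rw [permWord_eq]
  calc (List.finRange n).flatMap (blockOf 1)
      = (List.finRange n).flatMap (fun x => [x]) := by
        rw [List.flatMap_def, List.flatMap_def]
        congr 1
        exact List.map_congr_left (fun x _ => blockOf_fixed rfl)
    _ = List.finRange n := List.flatMap_singleton' _

lemma permWord_perm (σ : Equiv.Perm (Fin n)) : (permWord σ).Perm (List.finRange n) := by
  suffices h : ∀ (K : ℕ) (σ : Equiv.Perm (Fin n)), (∀ x : Fin n, K ≤ (x : ℕ) → σ x = x) →
      (permWord σ).Perm (List.finRange n) by
    exact h n σ (fun x hx => absurd x.isLt (not_lt.2 hx))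
  intro K
  induction K with
  | zero =>
    intro σ hσ
    have hone : σ = 1 := Equiv.ext (fun x => hσ x (Nat.zero_le _))
    rw [hone, permWord_one]
  | succ K ih =>
    intro σ hσ
    by_cases hK : K < n
    · set Kf : Fin n := ⟨K, hK⟩ with hKf
      by_cases hfixK : σ Kf = Kf
      · apply ih; intro x hx
        rcases eq_or_lt_of_le hx with he | hl
        · have hxK : x = Kf := Fin.ext he.symm
          rw [hxK]; exact hfixK
        · exact hσ x hl
      · set jf : Fin n := σ⁻¹ Kf with hjf
        have hσj : σ jf = Kf := Equiv.apply_symm_apply σ Kf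
        have hjne : jf ≠ Kf := fun hh => hfixK (by rw [← hh, hσj, hh])
        have hjlt : jf < Kf := by
          rcases lt_or_gt_of_ne hjne with hcase | hcase
          · exact hcase
          · exfalso
            have hfj : σ jf = jf := hσ jf (by exact_mod_cast hcase)
            rw [hσj] at hfj
            exact hjne hfj.symm
        set σ'' := σ * Equiv.swap jf Kf with hσ''
        have hfix' : ∀ x : Fin n, Kf ≤ x → σ'' x = x := by
          intro x hx
          by_cases hxK : x = Kf
          · rw [hxK]
            show σ (Equiv.swap jf Kf Kf) = Kf
            rw [Equiv.swap_apply_right]; exact hσj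
          · have hxj : x ≠ jf := by
              intro hh; rw [hh] at hx; exact absurd hx (not_le.2 hjlt)
            show σ (Equiv.swap jf Kf x) = x
            rw [Equiv.swap_apply_of_ne_of_ne hxj hxK]
            apply hσ
            have h1 : (Kf : ℕ) ≤ (x : ℕ) := hx
            have h2 : (Kf : ℕ) ≠ (x : ℕ) := fun hh => hxK (Fin.ext hh.symm)
            simp only [hKf] at h1 h2 ⊢
            omega
        have hback : σ'' * Equiv.swap jf Kf = σ := by
          rw [hσ'', mul_assoc, Equiv.swap_mul_self, mul_one]
        obtain ⟨A, B, C, h1, h2, _, _, _⟩ := insert_struct σ'' Kf jf hfix' hjlt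
        rw [hback] at h2
        rw [h2]
        have hperm : (A ++ jf :: Kf :: (B ++ C)).Perm (A ++ jf :: (B ++ Kf :: C)) := by
          apply List.Perm.append_left
          apply List.Perm.cons
          exact List.perm_middle.symm
        refine hperm.trans ?_
        rw [← h1]
        exact ih σ'' hfix'
    · exact ih σ (fun x hx => absurd (lt_of_lt_of_le x.isLt (le_of_not_gt hK)) (not_lt.2 hx))

lemma permWord_nodup (σ : Equiv.Perm (Fin n)) : (permWord σ).Nodup :=
  (permWord_perm σ).nodup_iff.2 (List.nodup_finRange n)

lemma permWord_mem (σ : Equiv.Perm (Fin n)) (x : Fin n) : x ∈ permWord σ :=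
  (permWord_perm σ).mem_iff.2 (List.mem_finRange x)

end PermWord

section Weight
variable {n : ℕ}
open Equiv List

theorem wt_insert (h : Hessenberg n) (σ' : Equiv.Perm (Fin n)) (k j : Fin n)
    (hfix : ∀ x : Fin n, k ≤ x → σ' x = x) (hjk : j < k) :
    wtPerm h (σ' * Equiv.swap j k) = wtPerm h σ'
      + (Finset.univ.filter (fun i' : Fin n => i' < k ∧ k ≤ h.m i' ∧
          (permWord σ').idxOf j < (permWord σ').idxOf i')).card := by
  classical
  obtain ⟨A, B, C, h1, h2, hAlt, hBlt, hClt⟩ := insert_struct σ' k j hfix hjk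
  unfold wtPerm invWord
  set w1 := permWord σ' with hw1def
  set w2 := permWord (σ' * Equiv.swap j k) with hw2def
  have hnd1 : w1.Nodup := permWord_nodup σ'
  have hnd2 : w2.Nodup := permWord_nodup _
  have hmem1 : ∀ x : Fin n, x ∈ w1 := permWord_mem σ'
  have hmem2 : ∀ x : Fin n, x ∈ w2 := permWord_mem _
  have hnd1' : (A ++ j :: (B ++ k :: C)).Nodup := h1 ▸ hnd1
  rw [List.nodup_append] at hnd1'
  obtain ⟨hndA, hndR, hdisjA⟩ := hnd1'
  rw [List.nodup_cons] at hndR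
  obtain ⟨hjBC, hndBC⟩ := hndR
  have hjA : j ∉ A := fun hh => hdisjA j hh j (by simp) rfl
  have hjB : j ∉ B := fun hh => hjBC (by simp [hh])
  have hkA : k ∉ A := fun hh => lt_irrefl k (hAlt k hh)
  have hkB : k ∉ B := fun hh => lt_irrefl k (hBlt k hh)
  have hkj : j ≠ k := ne_of_lt hjk
  have hw1' : w1 = (A ++ j :: B) ++ k :: C := by rw [h1]; simp
  have hw2' : w2 = (A ++ [j]) ++ k :: (B ++ C) := by rw [h2]; simp
  have hkAjB : k ∉ A ++ j :: B := by
    intro hh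
    rcases List.mem_append.1 hh with hh | hh
    · exact hkA hh
    · rcases List.mem_cons.1 hh with hh | hh
      · exact hkj hh.symm
      · exact hkB hh
  have hkAj : k ∉ A ++ [j] := by
    intro hh
    rcases List.mem_append.1 hh with hh | hh
    · exact hkA hh
    · simp at hh; exact hkj hh.symm
  have he1 : w1.erase k = (A ++ j :: B) ++ C := by
    rw [hw1', List.erase_append_right _ hkAjB, List.erase_cons_head]
  have he2 : w2.erase k = (A ++ [j]) ++ (B ++ C) := by
    rw [hw2', List.erase_append_right _ hkAj, List.erase_cons_head]
  have heq12 : w1.erase k = w2.erase k := by rw [he1, he2]; simp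
  have hnd2' : ((A ++ [j]) ++ k :: (B ++ C)).Nodup := hw2' ▸ hnd2
  rw [List.nodup_append] at hnd2'
  obtain ⟨-, -, hdisj2⟩ := hnd2'
  have hD : ∀ x : Fin n, x < k → x ∈ A ++ j :: B := by
    intro x hx
    have hx1 : x ∈ w1 := hmem1 x
    rw [hw1'] at hx1
    rcases List.mem_append.1 hx1 with hh | hh
    · exact hh
    · rcases List.mem_cons.1 hh with hh | hh
      · exact absurd hh (ne_of_lt hx)
      · exact absurd (hClt x hh) (not_lt.2 (le_of_lt hx))
  have hidx_lt_k_w1 : ∀ x : Fin n, x < k → w1.idxOf x < w1.idxOf k := by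
    intro x hx
    rw [hw1']
    exact idx_lt_of_left (hD x hx) hkAjB
  have hidx_k_lt_C_w1 : ∀ x ∈ C, w1.idxOf k < w1.idxOf x := by
    intro x hx
    have hxk : k < x := hClt x hx
    have hxAjB : x ∉ A ++ j :: B := by
      intro hh
      rcases List.mem_append.1 hh with hh | hh
      · exact absurd (hAlt x hh) (not_lt.2 (le_of_lt hxk))
      · rcases List.mem_cons.1 hh with hh | hh
        · exact absurd (hh ▸ hxk) (not_lt.2 (le_of_lt hjk))
        · exact absurd (hBlt x hh) (not_lt.2 (le_of_lt hxk))
    rw [hw1', idx_append_right hxAjB, idx_append_right hkAjB,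
      List.idxOf_cons_self, idx_cons_ne (ne_of_lt hxk)]
    omega
  have hjmem : j ∈ A ++ j :: B := by simp
  have hidx_Bside_w1 : ∀ x ∈ B, w1.idxOf j < w1.idxOf x := by
    intro x hx
    have hxA : x ∉ A := fun hh => hdisjA x hh x (by simp [hx]) rfl
    have hxj : x ≠ j := fun hh => hjB (hh ▸ hx)
    rw [hw1', idx_append_left hjmem, idx_append_left (show x ∈ A ++ j :: B by simp [hx]),
      idx_append_right hjA, idx_append_right hxA, List.idxOf_cons_self,
      idx_cons_ne (Ne.symm hxj)]
    omega
  have hidx_Aj_w1 : ∀ x, x ∈ A ∨ x = j → ¬ (w1.idxOf j < w1.idxOf x) := by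
    intro x hx
    rcases hx with hx | hx
    · rw [hw1', idx_append_left hjmem, idx_append_left (show x ∈ A ++ j :: B by simp [hx]),
        idx_append_right hjA, idx_append_left hx, List.idxOf_cons_self]
      have := List.idxOf_lt_length_iff.2 hx
      omega
    · rw [hx]; omega
  have hidx_Aj_w2 : ∀ x, x ∈ A ∨ x = j → w2.idxOf x < w2.idxOf k := by
    intro x hx
    rw [hw2']
    refine idx_lt_of_left ?_ hkAj
    rcases hx with hx | hx
    · simp [hx]
    · simp [hx]
  have hidx_BC_w2 : ∀ x, x ∈ B ++ C → w2.idxOf k < w2.idxOf x := by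
    intro x hx
    have hxk : x ≠ k := by
      intro hh; rw [hh] at hx
      rcases List.mem_append.1 hx with hh2 | hh2
      · exact hkB hh2
      · exact lt_irrefl k (hClt k hh2)
    have hxAj : x ∉ A ++ [j] := fun hh => hdisj2 x hh x (by simp [hx]) rfl
    rw [hw2', idx_append_right hxAj, idx_append_right hkAj, List.idxOf_cons_self,
      idx_cons_ne (Ne.symm hxk)]
    omega
  set S1 := Finset.univ.filter (fun p : Fin n × Fin n =>
    p.1 < p.2 ∧ p.2 ≤ h.m p.1 ∧ w1.idxOf p.2 < w1.idxOf p.1) with hS1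
  set S2 := Finset.univ.filter (fun p : Fin n × Fin n =>
    p.1 < p.2 ∧ p.2 ≤ h.m p.1 ∧ w2.idxOf p.2 < w2.idxOf p.1) with hS2
  set E := Finset.univ.filter (fun i' : Fin n => i' < k ∧ k ≤ h.m i' ∧
    w1.idxOf j < w1.idxOf i') with hE
  have hstep : S2 = S1 ∪ E.image (fun i' => (i', k)) := by
    ext p
    obtain ⟨x, y⟩ := p
    simp only [hS1, hS2, hE, Finset.mem_union, Finset.mem_filter, Finset.mem_univ, true_and,
      Finset.mem_image, Prod.mk.injEq]
    constructor
    · rintro ⟨hxy, hym, hidx⟩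
      by_cases hyk : y = k
      · subst hyk
        right
        refine ⟨x, ⟨hxy, hym, ?_⟩, rfl, rfl⟩
        have hxmem : x ∈ A ++ j :: B := hD x hxy
        rcases List.mem_append.1 hxmem with hxA | hxJB
        · exact absurd hidx (not_lt.2 (le_of_lt (hidx_Aj_w2 x (Or.inl hxA))))
        · rcases List.mem_cons.1 hxJB with hxj | hxB
          · exact absurd hidx (not_lt.2 (le_of_lt (hidx_Aj_w2 x (Or.inr hxj))))
          · exact hidx_Bside_w1 x hxB
      · by_cases hxk : x = k
        · exfalso
          rw [hxk] at hxy hidx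
          have hky : k < y := hxy
          have hymem : y ∈ B ++ C := by
            have hy2 := hmem2 y
            rw [hw2'] at hy2
            rcases List.mem_append.1 hy2 with hh | hh
            · exfalso
              rcases List.mem_append.1 hh with hh | hh
              · exact absurd (hAlt y hh) (not_lt.2 (le_of_lt hky))
              · simp at hh
                exact absurd (hh ▸ hky) (not_lt.2 (le_of_lt hjk))
            · rcases List.mem_cons.1 hh with hh | hh
              · exact absurd hh (ne_of_gt hky)
              · exact hh
          exact absurd hidx (not_lt.2 (le_of_lt (hidx_BC_w2 y hymem)))
        · left
          refine ⟨hxy, hym, ?_⟩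
          have hiff1 := idx_erase_lt_iff (l := w1) (a := k) hnd1 (hmem1 y) (hmem1 x) hyk hxk
          have hiff2 := idx_erase_lt_iff (l := w2) (a := k) hnd2 (hmem2 y) (hmem2 x) hyk hxk
          rw [← hiff1, heq12, hiff2]
          exact hidx
    · rintro (⟨hxy, hym, hidx⟩ | ⟨i', ⟨hik, him, hidxj⟩, hx, hy⟩)
      · by_cases hyk : y = k
        · exfalso
          subst hyk
          exact absurd hidx (not_lt.2 (le_of_lt (hidx_lt_k_w1 x hxy)))
        · by_cases hxk : x = k
          · exfalso
            rw [hxk] at hxy hidx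
            have hky : k < y := hxy
            have hymemC : y ∈ C := by
              have hy1 := hmem1 y
              rw [hw1'] at hy1
              rcases List.mem_append.1 hy1 with hh | hh
              · exfalso
                rcases List.mem_append.1 hh with hh | hh
                · exact absurd (hAlt y hh) (not_lt.2 (le_of_lt hky))
                · rcases List.mem_cons.1 hh with hh | hh
                  · exact absurd (hh ▸ hky) (not_lt.2 (le_of_lt hjk))
                  · exact absurd (hBlt y hh) (not_lt.2 (le_of_lt hky))
              · rcases List.mem_cons.1 hh with hh | hh
                · exact absurd hh (ne_of_gt hky)
                · exact hh
            exact absurd hidx (not_lt.2 (le_of_lt (hidx_k_lt_C_w1 y hymemC)))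
          · refine ⟨hxy, hym, ?_⟩
            have hiff1 := idx_erase_lt_iff (l := w1) (a := k) hnd1 (hmem1 y) (hmem1 x) hyk hxk
            have hiff2 := idx_erase_lt_iff (l := w2) (a := k) hnd2 (hmem2 y) (hmem2 x) hyk hxk
            rw [← hiff2, ← heq12, hiff1]
            exact hidx
      · subst hx
        subst hy
        refine ⟨hik, him, ?_⟩
        have himem : i' ∈ A ++ j :: B := hD i' hik
        rcases List.mem_append.1 himem with hiA | hiJB
        · exact absurd hidxj (hidx_Aj_w1 i' (Or.inl hiA))
        · rcases List.mem_cons.1 hiJB with hij | hiB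
          · exact absurd hidxj (hidx_Aj_w1 i' (Or.inr hij))
          · exact hidx_BC_w2 i' (List.mem_append.2 (Or.inl hiB))
  have hdisjSE : Disjoint S1 (E.image (fun i' => (i', k))) := by
    rw [Finset.disjoint_left]
    rintro ⟨x, y⟩ hp hq
    simp only [Finset.mem_image, Prod.mk.injEq] at hq
    obtain ⟨i', _, hx, hy⟩ := hq
    subst hx; subst hy
    simp only [hS1, Finset.mem_filter] at hp
    exact absurd hp.2.2.2 (not_lt.2 (le_of_lt (hidx_lt_k_w1 i' hp.2.1)))
  have hinj : Set.InjOn (fun i' : Fin n => ((i', k) : Fin n × Fin n)) E :=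
    fun a _ b _ hab => (Prod.mk.injEq _ _ _ _ ▸ hab).1
  show S2.card = S1.card + E.card
  rw [hstep, Finset.card_union_of_disjoint hdisjSE, Finset.card_image_of_injOn hinj]

end Weight

section Main
variable {n : ℕ}
open Equiv List Polynomial

lemma sum_pow_idx (w : List (Fin n)) (hw : w.Nodup) (hmem : ∀ x : Fin n, x ∈ w)
    (N : Finset (Fin n)) :
    ∑ j ∈ N, (Polynomial.X : Polynomial ℤ) ^
        (N.filter (fun i' => w.idxOf j < w.idxOf i')).card
      = qInt (Polynomial.X : Polynomial ℤ) N.card := by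
  classical
  set g : Fin n → ℕ := fun j => (N.filter (fun i' => w.idxOf j < w.idxOf i')).card with hg
  have hginj : ∀ j₁ ∈ N, ∀ j₂ ∈ N, g j₁ = g j₂ → j₁ = j₂ := by
    intro j₁ h₁ j₂ h₂ heq
    by_contra hne
    have hidxne : w.idxOf j₁ ≠ w.idxOf j₂ := fun hh =>
      hne ((List.idxOf_inj (hmem j₁)).1 hh)
    have key : ∀ a b : Fin n, a ∈ N → b ∈ N → w.idxOf a < w.idxOf b → g b < g a := by
      intro a b ha hb hab
      apply Finset.card_lt_card
      rw [Finset.ssubset_iff_of_subset]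
      · refine ⟨b, Finset.mem_filter.2 ⟨hb, hab⟩, ?_⟩
        simp only [Finset.mem_filter]
        rintro ⟨-, hcon⟩
        exact lt_irrefl _ hcon
      · intro z hz
        rw [Finset.mem_filter] at hz ⊢
        exact ⟨hz.1, lt_trans hab hz.2⟩
    rcases lt_or_gt_of_ne hidxne with hlt | hlt
    · exact absurd heq (ne_of_gt (key _ _ h₁ h₂ hlt))
    · exact absurd heq (ne_of_lt (key _ _ h₂ h₁ hlt))
  have hgbound : ∀ j ∈ N, g j < N.card := by
    intro j hj
    have hsub : (N.filter (fun i' => w.idxOf j < w.idxOf i')) ⊆ N.erase j := by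
      intro z hz
      rw [Finset.mem_filter] at hz
      refine Finset.mem_erase.2 ⟨?_, hz.1⟩
      intro hh; rw [hh] at hz; exact lt_irrefl _ hz.2
    calc g j ≤ (N.erase j).card := Finset.card_le_card hsub
      _ < N.card := Finset.card_erase_lt_of_mem hj
  have himg : N.image g = Finset.range N.card := by
    apply Finset.eq_of_subset_of_card_le
    · intro v hv
      obtain ⟨j, hj, rfl⟩ := Finset.mem_image.1 hv
      exact Finset.mem_range.2 (hgbound j hj)
    · rw [Finset.card_range, Finset.card_image_of_injOn
        (fun a ha b hb hab => hginj a ha b hb hab)]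
  rw [qInt, ← himg, Finset.sum_image hginj]

/-- the permutations `σ ≤ m` fixing everything `≥ K`. -/
def Pk (h : Hessenberg n) (K : ℕ) : Finset (Equiv.Perm (Fin n)) :=
  Finset.univ.filter (fun σ => (∀ i, σ i ≤ h.m i) ∧ ∀ x : Fin n, K ≤ (x : ℕ) → σ x = x)

/-- number of smaller neighbours. -/
def dval (h : Hessenberg n) (i : Fin n) : ℕ :=
  (Finset.univ.filter (fun j => j < i ∧ i ≤ h.m j)).card

lemma main_induction (h : Hessenberg n) : ∀ K : ℕ, K ≤ n →
    ∑ σ ∈ Pk h K, (Polynomial.X : Polynomial ℤ) ^ wtPerm h σ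
      = ∏ i ∈ Finset.univ.filter (fun i : Fin n => (i : ℕ) < K),
          (1 + qInt (Polynomial.X : Polynomial ℤ) (dval h i)) := by
  intro K
  induction K with
  | zero =>
    intro _
    have hP : Pk h 0 = {1} := by
      ext σ
      simp only [Pk, Finset.mem_filter, Finset.mem_univ, true_and, Finset.mem_singleton]
      constructor
      · rintro ⟨-, hfix⟩
        exact Equiv.ext fun x => hfix x (Nat.zero_le _)
      · rintro rfl
        exact ⟨fun i => by simpa using h.le_m i, fun x _ => rfl⟩
    have hflt : Finset.univ.filter (fun i : Fin n => (i : ℕ) < 0) = ∅ :=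
      Finset.filter_false_of_mem (fun i _ => by omega)
    have hwt : wtPerm h 1 = 0 := by
      unfold wtPerm invWord
      rw [permWord_one]
      rw [Finset.card_eq_zero]
      apply Finset.filter_false_of_mem
      rintro p - ⟨hlt, -, hidx⟩
      rw [List.idxOf_finRange, List.idxOf_finRange] at hidx
      rw [Fin.lt_def] at hlt
      omega
    rw [hP, hflt, Finset.sum_singleton, Finset.prod_empty, hwt, pow_zero]
  | succ K ih =>
    intro hK1
    have hK : K < n := hK1
    set Kf : Fin n := ⟨K, hK⟩ with hKf
    set NK := Finset.univ.filter (fun j : Fin n => j < Kf ∧ Kf ≤ h.m j) with hNK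
    have hfixmem : ∀ σ' ∈ Pk h K, ∀ x : Fin n, Kf ≤ x → σ' x = x := by
      intro σ' hσ' x hx
      exact ((Finset.mem_filter.1 hσ').2).2 x (by exact_mod_cast hx)
    have hsplit : Pk h (K+1) = Pk h K ∪ (NK ×ˢ Pk h K).image
        (fun q => q.2 * Equiv.swap q.1 Kf) := by
      ext σ
      simp only [Pk, NK, Finset.mem_union, Finset.mem_filter, Finset.mem_univ, true_and,
        Finset.mem_image, Finset.mem_product]
      constructor
      · rintro ⟨hle, hfix⟩
        by_cases hfixK : σ Kf = Kf
        · left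
          refine ⟨hle, fun x hx => ?_⟩
          rcases eq_or_lt_of_le hx with he | hl
          · rw [show x = Kf from Fin.ext he.symm]; exact hfixK
          · exact hfix x hl
        · right
          have hσj : σ (σ⁻¹ Kf) = Kf := Equiv.apply_symm_apply σ Kf
          have hjne : σ⁻¹ Kf ≠ Kf := fun hh => hfixK (by rw [← hh, hσj, hh])
          have hjlt : σ⁻¹ Kf < Kf := by
            rcases lt_or_gt_of_ne hjne with hc | hc
            · exact hc
            · exfalso
              have hfj : σ (σ⁻¹ Kf) = σ⁻¹ Kf := hfix (σ⁻¹ Kf) (by exact_mod_cast hc)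
              rw [hσj] at hfj
              exact hjne hfj.symm
          have hKm : Kf ≤ h.m (σ⁻¹ Kf) := by
            have := hle (σ⁻¹ Kf); rwa [hσj] at this
          refine ⟨(σ⁻¹ Kf, σ * Equiv.swap (σ⁻¹ Kf) Kf), ⟨⟨hjlt, hKm⟩, ?_, ?_⟩, ?_⟩
          · intro i
            show σ (Equiv.swap (σ⁻¹ Kf) Kf i) ≤ h.m i
            by_cases hij : i = σ⁻¹ Kf
            · rw [hij, Equiv.swap_apply_left]
              have hlt2 : σ Kf < Kf := by
                rcases lt_trichotomy (σ Kf) Kf with hc | hc | hc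
                · exact hc
                · exact absurd hc hfixK
                · exfalso
                  have hy := hfix (σ Kf) (by exact_mod_cast hc)
                  exact hfixK (σ.injective hy)
              exact le_trans (le_of_lt hlt2) hKm
            · by_cases hiK : i = Kf
              · rw [hiK, Equiv.swap_apply_right, hσj]
                exact h.le_m Kf
              · rw [Equiv.swap_apply_of_ne_of_ne hij hiK]
                exact hle i
          · intro x hx
            show σ (Equiv.swap (σ⁻¹ Kf) Kf x) = x
            by_cases hxK : x = Kf
            · rw [hxK, Equiv.swap_apply_right]; exact hσj
            · have hxj : x ≠ σ⁻¹ Kf := by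
                intro hh
                have hjK : (σ⁻¹ Kf : Fin n) < Kf := hjlt
                rw [Fin.lt_def] at hjK
                rw [hh] at hx
                simp only [hKf] at hjK hx
                omega
              rw [Equiv.swap_apply_of_ne_of_ne hxj hxK]
              apply hfix
              have h2 : (x : ℕ) ≠ K := fun hh => hxK (Fin.ext hh)
              omega
          · rw [mul_assoc, Equiv.swap_mul_self, mul_one]
      · rintro (⟨hle, hfix⟩ | ⟨⟨jf, σ'⟩, ⟨⟨hjlt, hjm⟩, hle', hfix'⟩, rfl⟩)
        · exact ⟨hle, fun x hx => hfix x (by omega)⟩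
        · have hj2 : (jf : ℕ) < K := by
            have := hjlt; rw [Fin.lt_def] at this; simpa [hKf] using this
          constructor
          · intro i
            show σ' (Equiv.swap jf Kf i) ≤ h.m i
            by_cases hij : i = jf
            · rw [hij, Equiv.swap_apply_left, hfix' Kf (by simp [hKf])]
              exact hjm
            · by_cases hiK : i = Kf
              · rw [hiK, Equiv.swap_apply_right]
                exact le_trans (hle' jf) (h.mono (le_of_lt hjlt))
              · rw [Equiv.swap_apply_of_ne_of_ne hij hiK]
                exact hle' i
          · intro x hx
            show σ' (Equiv.swap jf Kf x) = x
            have hxj : x ≠ jf := by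
              intro hh; rw [hh] at hx; omega
            have hxK : x ≠ Kf := by
              intro hh; rw [hh] at hx; simp only [hKf] at hx; omega
            rw [Equiv.swap_apply_of_ne_of_ne hxj hxK]
            exact hfix' x (by omega)
    have hdisj : Disjoint (Pk h K) ((NK ×ˢ Pk h K).image
        (fun q => q.2 * Equiv.swap q.1 Kf)) := by
      rw [Finset.disjoint_left]
      intro σ hσ hσ'
      obtain ⟨⟨jf, σ'⟩, hq, rfl⟩ := Finset.mem_image.1 hσ'
      rw [Finset.mem_product] at hq
      have hjlt : jf < Kf := ((Finset.mem_filter.1 hq.1).2).1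
      have h1 : (σ' * Equiv.swap jf Kf) Kf = σ' jf := by
        show σ' (Equiv.swap jf Kf Kf) = σ' jf
        rw [Equiv.swap_apply_right]
      have h2 : (σ' * Equiv.swap jf Kf) Kf = Kf :=
        ((Finset.mem_filter.1 hσ).2).2 Kf (by simp [hKf])
      have h3 : σ' Kf = Kf := hfixmem σ' hq.2 Kf le_rfl
      have h4 : σ' jf = σ' Kf := by rw [← h1, h2, h3]
      exact absurd (σ'.injective h4) (ne_of_lt hjlt)
    have hinjQ : ∀ q₁ ∈ NK ×ˢ Pk h K, ∀ q₂ ∈ NK ×ˢ Pk h K,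
        q₁.2 * Equiv.swap q₁.1 Kf = q₂.2 * Equiv.swap q₂.1 Kf → q₁ = q₂ := by
      rintro ⟨j₁, σ₁⟩ hq₁ ⟨j₂, σ₂⟩ hq₂ heq
      rw [Finset.mem_product] at hq₁ hq₂
      have hfix₁ : σ₁ Kf = Kf := hfixmem σ₁ hq₁.2 Kf le_rfl
      have hfix₂ : σ₂ Kf = Kf := hfixmem σ₂ hq₂.2 Kf le_rfl
      have hv₁ : (σ₁ * Equiv.swap j₁ Kf) j₁ = Kf := by
        show σ₁ (Equiv.swap j₁ Kf j₁) = Kf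
        rw [Equiv.swap_apply_left]; exact hfix₁
      have hv₂ : (σ₂ * Equiv.swap j₂ Kf) j₂ = Kf := by
        show σ₂ (Equiv.swap j₂ Kf j₂) = Kf
        rw [Equiv.swap_apply_left]; exact hfix₂
      have hj12 : j₁ = j₂ := by
        apply (σ₂ * Equiv.swap j₂ Kf).injective
        rw [hv₂, ← heq, hv₁]
      have hs12 : σ₁ = σ₂ := by
        rw [hj12] at heq
        calc σ₁ = σ₁ * Equiv.swap j₂ Kf * Equiv.swap j₂ Kf := by
              rw [mul_assoc, Equiv.swap_mul_self, mul_one]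
          _ = σ₂ * Equiv.swap j₂ Kf * Equiv.swap j₂ Kf := by rw [heq]
          _ = σ₂ := by rw [mul_assoc, Equiv.swap_mul_self, mul_one]
      rw [Prod.mk.injEq]
      exact ⟨hj12, hs12⟩
    have hterm : ∀ σ' ∈ Pk h K,
        (∑ jf ∈ NK, (Polynomial.X : Polynomial ℤ) ^ wtPerm h (σ' * Equiv.swap jf Kf))
          = (Polynomial.X : Polynomial ℤ) ^ wtPerm h σ' * qInt Polynomial.X NK.card := by
      intro σ' hσ'
      have hfixσ' := hfixmem σ' hσ'
      calc (∑ jf ∈ NK, (Polynomial.X : Polynomial ℤ) ^ wtPerm h (σ' * Equiv.swap jf Kf))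
          = ∑ jf ∈ NK, (Polynomial.X : Polynomial ℤ) ^ wtPerm h σ' *
              (Polynomial.X : Polynomial ℤ) ^ (NK.filter (fun i' =>
                (permWord σ').idxOf jf < (permWord σ').idxOf i')).card := by
            apply Finset.sum_congr rfl
            intro jf hjf
            have hjflt : jf < Kf := by
              rw [hNK, Finset.mem_filter] at hjf
              exact hjf.2.1
            rw [wt_insert h σ' Kf jf hfixσ' hjflt, pow_add]
            have hset : Finset.univ.filter (fun i' : Fin n => i' < Kf ∧ Kf ≤ h.m i' ∧
                (permWord σ').idxOf jf < (permWord σ').idxOf i')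
                = NK.filter (fun i' => (permWord σ').idxOf jf < (permWord σ').idxOf i') := by
              rw [hNK, Finset.filter_filter]
              ext x
              simp only [Finset.mem_filter, Finset.mem_univ, true_and]
              tauto
            rw [hset]
        _ = (Polynomial.X : Polynomial ℤ) ^ wtPerm h σ' * qInt Polynomial.X NK.card := by
            rw [← Finset.mul_sum,
              sum_pow_idx (permWord σ') (permWord_nodup σ') (permWord_mem σ') NK]
    have hprodstep : Finset.univ.filter (fun i : Fin n => (i : ℕ) < K + 1)
        = insert Kf (Finset.univ.filter (fun i : Fin n => (i : ℕ) < K)) := by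
      ext i
      simp only [Finset.mem_insert, Finset.mem_filter, Finset.mem_univ, true_and]
      constructor
      · intro hi
        by_cases he : (i : ℕ) = K
        · exact Or.inl (Fin.ext (by simp [hKf, he]))
        · exact Or.inr (by omega)
      · rintro (rfl | hi)
        · simp [hKf]
        · omega
    have hKnot : Kf ∉ Finset.univ.filter (fun i : Fin n => (i : ℕ) < K) := by
      simp [hKf]
    have hdK : dval h Kf = NK.card := by rw [dval, hNK]
    rw [hsplit, Finset.sum_union hdisj, Finset.sum_image hinjQ, Finset.sum_product,
      Finset.sum_comm, Finset.sum_congr rfl hterm, hprodstep, Finset.prod_insert hKnot,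
      ← ih (by omega), hdK, ← Finset.sum_mul]
    ring
end Main

section Final
variable {n : ℕ}
open Polynomial

lemma dval_ge_iff (h : Hessenberg n) (k : Fin n) (t : ℕ) (ht : t ≤ (k : ℕ))
    (j : Fin n) (hj : (j : ℕ) + t = (k : ℕ)) :
    t ≤ dval h k ↔ (k : ℕ) ≤ (h.m j : ℕ) := by
  classical
  set S := Finset.univ.filter (fun j' : Fin n => j' < k ∧ k ≤ h.m j') with hS
  have hdS : dval h k = S.card := rfl
  constructor
  · intro hd
    rcases Nat.eq_zero_or_pos t with rfl | htpos
    · have hjk : j = k := Fin.ext (by omega)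
      rw [hjk]
      exact h.le_m k
    · by_contra hcon
      push_neg at hcon
      have hsub : ∀ x ∈ S, (j : ℕ) < (x : ℕ) ∧ (x : ℕ) < (k : ℕ) := by
        intro x hx
        rw [hS, Finset.mem_filter] at hx
        obtain ⟨-, hxk, hkm⟩ := hx
        rw [Fin.lt_def] at hxk
        refine ⟨?_, hxk⟩
        by_contra hle
        push_neg at hle
        have hmono : h.m x ≤ h.m j := h.mono (by rw [Fin.le_def]; omega)
        rw [Fin.le_def] at hkm hmono
        omega
      have hcard : S.card ≤ (Finset.Ico ((j : ℕ) + 1) (k : ℕ)).card := by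
        refine Finset.card_le_card_of_injOn (fun x => (x : ℕ)) ?_ ?_
        · intro x hx
          rw [Finset.mem_coe, Finset.mem_Ico]
          have := hsub x hx
          show (j : ℕ) + 1 ≤ (x : ℕ) ∧ (x : ℕ) < (k : ℕ)
          omega
        · intro a _ b _ hab
          exact Fin.ext hab
      rw [Nat.card_Ico] at hcard
      omega
  · intro hm
    have hinj : (Finset.range t).card ≤ S.card := by
      refine Finset.card_le_card_of_injOn
        (fun i => (⟨(j : ℕ) + min i (t-1), by have := k.isLt; omega⟩ : Fin n)) ?_ ?_
      · intro i hi
        rw [Finset.mem_coe, Finset.mem_range] at hi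
        rw [hS, Finset.mem_coe, Finset.mem_filter]
        refine ⟨Finset.mem_univ _, ?_, ?_⟩
        · rw [Fin.lt_def]
          show (j : ℕ) + min i (t-1) < (k : ℕ)
          omega
        · refine le_trans ?_ (h.mono (show j ≤ ⟨(j : ℕ) + min i (t-1),
              by have := k.isLt; omega⟩ by
            rw [Fin.le_def]; show (j : ℕ) ≤ (j : ℕ) + min i (t-1); omega))
          rw [Fin.le_def]
          exact hm
      · intro a ha b hb hab
        rw [Finset.mem_coe, Finset.mem_range] at ha hb
        rw [Fin.ext_iff] at hab
        have hab' : (j : ℕ) + min a (t-1) = (j : ℕ) + min b (t-1) := hab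
        omega
    rw [Finset.card_range] at hinj
    omega

lemma count_eq (h : Hessenberg n) (t : ℕ) :
    (Finset.univ.filter (fun i : Fin n => t ≤ (h.m i : ℕ) - (i : ℕ))).card
      = (Finset.univ.filter (fun k : Fin n => t ≤ dval h k)).card := by
  classical
  have hbnd : ∀ a : Fin n, a ∈ Finset.univ.filter
      (fun i : Fin n => t ≤ (h.m i : ℕ) - (i : ℕ)) → (a : ℕ) + t < n := by
    intro a ha
    rw [Finset.mem_filter] at ha
    have h1 : (a : ℕ) ≤ (h.m a : ℕ) := h.le_m a
    have h2 : (h.m a : ℕ) < n := (h.m a).isLt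
    omega
  apply Finset.card_bij (fun (a : Fin n) ha => (⟨(a : ℕ) + t, hbnd a ha⟩ : Fin n))
  · intro a ha
    have hbd := hbnd a ha
    rw [Finset.mem_filter] at ha ⊢
    obtain ⟨-, hat⟩ := ha
    have h1 : (a : ℕ) ≤ (h.m a : ℕ) := h.le_m a
    refine ⟨Finset.mem_univ _, ?_⟩
    rw [dval_ge_iff h _ t (by show t ≤ (a : ℕ) + t; omega) a (by simp)]
    show (a : ℕ) + t ≤ (h.m a : ℕ)
    omega
  · intro a ha b hb hab
    rw [Fin.ext_iff] at hab ⊢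
    have : (a : ℕ) + t = (b : ℕ) + t := hab
    omega
  · intro k hk
    rw [Finset.mem_filter] at hk
    obtain ⟨-, hdk⟩ := hk
    have htk : t ≤ (k : ℕ) := by
      by_contra hcon
      push_neg at hcon
      have hsub : dval h k ≤ (k : ℕ) := by
        rw [dval]
        calc _ ≤ (Finset.range (k : ℕ)).card := by
              refine Finset.card_le_card_of_injOn (fun j => (j : ℕ)) ?_ ?_
              · intro j hj
                rw [Finset.mem_coe, Finset.mem_filter] at hj
                rw [Finset.mem_coe, Finset.mem_range]
                exact hj.2.1
              · intro a _ b _ hab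
                exact Fin.ext hab
          _ = (k : ℕ) := Finset.card_range _
      omega
    have hkn : (k : ℕ) - t < n := by have := k.isLt; omega
    rw [dval_ge_iff h k t htk ⟨(k : ℕ) - t, hkn⟩ (by show (k:ℕ) - t + t = (k:ℕ); omega)] at hdk
    refine ⟨⟨(k : ℕ) - t, hkn⟩, ?_, ?_⟩
    · rw [Finset.mem_filter]
      refine ⟨Finset.mem_univ _, ?_⟩
      show t ≤ (h.m ⟨(k : ℕ) - t, hkn⟩ : ℕ) - ((k : ℕ) - t)
      omega
    · apply Fin.ext
      show (k : ℕ) - t + t = (k : ℕ)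
      omega

lemma filter_card_split (f : Fin n → ℕ) (v : ℕ) :
    (Finset.univ.filter (fun i : Fin n => v ≤ f i)).card
      = (Finset.univ.filter (fun i : Fin n => v = f i)).card
        + (Finset.univ.filter (fun i : Fin n => v + 1 ≤ f i)).card := by
  classical
  rw [← Finset.card_union_of_disjoint]
  · congr 1
    ext i
    simp only [Finset.mem_union, Finset.mem_filter, Finset.mem_univ, true_and]
    omega
  · rw [Finset.disjoint_left]
    intro i hi hj
    rw [Finset.mem_filter] at hi hj
    omega

lemma prod_eq (h : Hessenberg n) :
    (∏ i : Fin n, (1 + qInt (Polynomial.X : Polynomial ℤ) (dval h i)))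
      = ∏ i : Fin n, (1 + qInt (Polynomial.X : Polynomial ℤ) ((h.m i : ℕ) - (i : ℕ))) := by
  classical
  have hcard : ∀ v : ℕ, (Finset.univ.filter (fun i : Fin n => v = dval h i)).card
      = (Finset.univ.filter (fun i : Fin n => v = (h.m i : ℕ) - (i : ℕ))).card := by
    intro v
    have h1 := filter_card_split (dval h) v
    have h2 := filter_card_split (fun i : Fin n => (h.m i : ℕ) - (i : ℕ)) v
    have e1 := count_eq h v
    have e2 := count_eq h (v + 1)
    omega
  have hms : Multiset.map (fun i : Fin n => dval h i) Finset.univ.val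
      = Multiset.map (fun i : Fin n => (h.m i : ℕ) - (i : ℕ)) Finset.univ.val := by
    apply Multiset.ext.2
    intro v
    rw [Multiset.count_map, Multiset.count_map]
    rw [← Finset.filter_val, ← Finset.filter_val, ← Finset.card_def, ← Finset.card_def]
    exact hcard v
  calc (∏ i : Fin n, (1 + qInt (Polynomial.X : Polynomial ℤ) (dval h i)))
      = ((Finset.univ.val.map (fun i : Fin n => dval h i)).map
          (fun d => 1 + qInt (Polynomial.X : Polynomial ℤ) d)).prod := by
        rw [Finset.prod_eq_multiset_prod, Multiset.map_map]
        rfl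
    _ = ((Finset.univ.val.map (fun i : Fin n => (h.m i : ℕ) - (i : ℕ))).map
          (fun d => 1 + qInt (Polynomial.X : Polynomial ℤ) d)).prod := by rw [hms]
    _ = ∏ i : Fin n, (1 + qInt (Polynomial.X : Polynomial ℤ) ((h.m i : ℕ) - (i : ℕ))) := by
        rw [Finset.prod_eq_multiset_prod, Multiset.map_map]
        rfl

end Final

end HessAux

/-- `Σ_{σ ≤ m} q^{wt_m(σ)} = Π_{i=1}^n (1 + [m(i) - i]_q)` in `ℤ[q]`.
(0-indexed: the 1-indexed quantity `m(i) - i` equals `(m.m i : ℕ) - (i : ℕ)`.) -/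
theorem sum_perms_eq_prod (n : ℕ) (hn : 1 ≤ n) (h : Hessenberg n) :
    ∑ σ ∈ Finset.univ.filter (fun σ : Equiv.Perm (Fin n) => ∀ i, σ i ≤ h.m i),
        (Polynomial.X : Polynomial ℤ) ^ wtPerm h σ
      = ∏ i : Fin n, (1 + qInt (Polynomial.X : Polynomial ℤ) ((h.m i : ℕ) - (i : ℕ))) := by
  classical
  have hmain := HessAux.main_induction h n le_rfl
  have hPn : HessAux.Pk h n = Finset.univ.filter
      (fun σ : Equiv.Perm (Fin n) => ∀ i, σ i ≤ h.m i) := by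
    ext σ
    simp only [HessAux.Pk, Finset.mem_filter, Finset.mem_univ, true_and]
    constructor
    · rintro ⟨h1, -⟩; exact h1
    · intro h1; exact ⟨h1, fun x hx => absurd x.isLt (not_lt.2 hx)⟩
  have hfull : Finset.univ.filter (fun i : Fin n => (i : ℕ) < n) = Finset.univ :=
    Finset.filter_true_of_mem (fun i _ => i.isLt)
  rw [← hPn, hmain, hfull]
  exact HessAux.prod_eq h
end
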